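/- arXiv:1811.09936 — 7 statements merged into one kernel-verified Lean document; each statement's English description precedes it below -/
import Mathlib

section
/- Let (a_n)_{n≥1} be a sequence of real numbers and N a positive integer such that the partial sums satisfy ∑_{i=1}^n a_i ≤ 0 for all n ≥ N. Then there exists k with 1 ≤ k ≤ N such that ∑_{i=1}^n a_{i+k-1} ≤ 0 for all n ≥ 1. -/
/-- If the partial sums `∑_{i=1}^n a_i` are nonpositive for all `n ≥ N`, then there
exists `1 ≤ k ≤ N` such that all partial sums of the shifted sequence
`∑_{i=1}^n a_{i+k-1} = ∑_{i=0}^{n-1} a_{i+k}` are nonpositive. -/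
theorem shifted_partial_sums_nonpos (a : ℕ → ℝ) (N : ℕ) (hN : 1 ≤ N)
    (h : ∀ n, N ≤ n → ∑ i ∈ Finset.Icc 1 n, a i ≤ 0) :
    ∃ k, 1 ≤ k ∧ k ≤ N ∧ ∀ n, 1 ≤ n → ∑ i ∈ Finset.range n, a (i + k) ≤ 0 := by
  set S : ℕ → ℝ := fun n => ∑ i ∈ Finset.Icc 1 n, a i with hS
  obtain ⟨m, hm, hmax⟩ := Finset.exists_max_image (Finset.range N) S ⟨0, by simp; omega⟩
  refine ⟨m + 1, by omega, by simpa using Finset.mem_range.mp hm, fun n hn => ?_⟩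
  have key : ∑ i ∈ Finset.range n, a (i + (m + 1)) = S (m + n) - S m := by
    have h1 : S (m + n) = S m + ∑ i ∈ Finset.Ioc m (m + n), a i := by
      simp only [hS]
      rw [show Finset.Icc 1 (m+n) = Finset.Ioc 0 (m+n) by rfl,
        show Finset.Icc 1 m = Finset.Ioc 0 m by rfl,
        ← Finset.sum_Ioc_consecutive _ (Nat.zero_le m) (Nat.le_add_right m n)]
    have h2 : ∑ i ∈ Finset.Ioc m (m + n), a i = ∑ i ∈ Finset.range n, a (i + (m + 1)) := by
      rw [← Finset.Ico_add_one_add_one_eq_Ioc, Finset.sum_Ico_eq_sum_range,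
        show m + n + 1 - (m + 1) = n by omega]
      refine Finset.sum_congr rfl fun i _ => ?_
      congr 1
      omega
    rw [h1, h2]; ring
  rw [key]
  rcases le_or_gt N (m + n) with hle | hlt
  · have h1 : S (m + n) ≤ 0 := h _ hle
    have h2 : 0 ≤ S m := by simpa [hS] using hmax 0 (by simp; omega)
    linarith
  · have := hmax (m + n) (Finset.mem_range.mpr hlt)
    linarith
end

section
/- (Pliss Lemma) Given constants p_0 ≥ p_1 > p_2 > 0, there exists ρ = ρ(p_0,p_1,p_2) > 0 such that for any N ∈ ℕ and real numbers a_1,…,a_N with (1/N)∑_{i=1}^N a_i ≥ p_1 and a_i ≤ p_0 for all 1 ≤ i ≤ N, there exist ℓ > ρN and integers 1 ≤ n_1 < ⋯ < n_ℓ ≤ N such that for each 1 ≤ j ≤ ℓ and every 0 ≤ n < n_j one has (1/(n_j−n))∑_{i=n+1}^{n_j} a_i ≥ p_2. -/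
/-- Pliss Lemma: given `p₀ ≥ p₁ > p₂ > 0` there is `ρ > 0` such that for any `N` and
reals `a₁,…,a_N` with average at least `p₁` and each `aᵢ ≤ p₀`, there are more than
`ρN` indices `j` in `[1,N]` (Pliss times) such that all averages `(1/(j-n))∑_{i=n+1}^j aᵢ`
with `0 ≤ n < j` are at least `p₂`. -/
theorem pliss_lemma (p0 p1 p2 : ℝ) (h01 : p1 ≤ p0) (h12 : p2 < p1) (h2 : 0 < p2) :
    ∃ ρ > (0 : ℝ), ∀ N : ℕ, 1 ≤ N → ∀ a : ℕ → ℝ,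
      p1 ≤ (∑ i ∈ Finset.Icc 1 N, a i) / N →
      (∀ i ∈ Finset.Icc 1 N, a i ≤ p0) →
      ∃ S : Finset ℕ, S ⊆ Finset.Icc 1 N ∧ ρ * N < (S.card : ℝ) ∧
        ∀ j ∈ S, ∀ n < j, p2 ≤ (∑ i ∈ Finset.Icc (n + 1) j, a i) / ((j : ℝ) - n) := by
  classical
  have hc : (0:ℝ) < p0 - p2 := by linarith
  refine ⟨(p1 - p2) / (2 * (p0 - p2)), div_pos (by linarith) (by linarith), ?_⟩
  intro N hN a havg hbound
  set T : ℕ → ℝ := fun n => ∑ i ∈ Finset.Ioc 0 n, (a i - p2) with hT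
  set P : Finset ℕ := (Finset.Icc 1 N).filter (fun j => ∀ m < j, T m ≤ T j) with hP
  have hIcc : ∀ n : ℕ, Finset.Icc 1 n = Finset.Ioc 0 n := fun n => by
    rw [← Finset.Icc_add_one_left_eq_Ioc]; rfl
  -- key bound by induction
  have key : ∀ n ≤ N, ∀ k ≤ n,
      T k ≤ (((Finset.Icc 1 n).filter (fun j => ∀ m < j, T m ≤ T j)).card : ℝ) * (p0 - p2) := by
    intro n
    induction n with
    | zero =>
      intro _ k hk
      interval_cases k
      simp [hT]
    | succ n ih =>
      intro hn k hk
      have hsub : (Finset.Icc 1 n).filter (fun j => ∀ m < j, T m ≤ T j) ⊆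
          (Finset.Icc 1 (n+1)).filter (fun j => ∀ m < j, T m ≤ T j) :=
        Finset.filter_subset_filter _ (Finset.Icc_subset_Icc_right (Nat.le_succ n))
      have hcard : (((Finset.Icc 1 n).filter (fun j => ∀ m < j, T m ≤ T j)).card : ℝ) ≤
          (((Finset.Icc 1 (n+1)).filter (fun j => ∀ m < j, T m ≤ T j)).card : ℝ) := by
        exact_mod_cast Finset.card_le_card hsub
      have ih' := ih (le_trans (Nat.le_succ n) hn)
      rcases Nat.lt_succ_iff_lt_or_eq.mp (Nat.lt_succ_of_le hk) with hk' | hk'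
      · calc T k ≤ _ := ih' k (Nat.lt_succ_iff.mp hk')
          _ ≤ _ := by
            exact mul_le_mul_of_nonneg_right hcard (le_of_lt hc)
      · subst hk'
        by_cases hrec : ∀ m < n + 1, T m ≤ T (n+1)
        · -- n+1 is a record
          have hmem : (n+1) ∈ (Finset.Icc 1 (n+1)).filter (fun j => ∀ m < j, T m ≤ T j) := by
            simp only [Finset.mem_filter, Finset.mem_Icc]
            exact ⟨⟨Nat.succ_le_succ (Nat.zero_le n), le_refl _⟩, hrec⟩
          have hnot : (n+1) ∉ (Finset.Icc 1 n).filter (fun j => ∀ m < j, T m ≤ T j) := by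
            simp [Finset.mem_filter, Finset.mem_Icc]
          have hins : insert (n+1) ((Finset.Icc 1 n).filter (fun j => ∀ m < j, T m ≤ T j)) ⊆
              (Finset.Icc 1 (n+1)).filter (fun j => ∀ m < j, T m ≤ T j) := by
            intro x hx
            rcases Finset.mem_insert.mp hx with rfl | hx
            · exact hmem
            · exact hsub hx
          have hcard' : (((Finset.Icc 1 n).filter (fun j => ∀ m < j, T m ≤ T j)).card + 1 : ℝ) ≤
              (((Finset.Icc 1 (n+1)).filter (fun j => ∀ m < j, T m ≤ T j)).card : ℝ) := by
            have := Finset.card_le_card hins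
            rw [Finset.card_insert_of_notMem hnot] at this
            exact_mod_cast this
          have hstep : T (n+1) = T n + (a (n+1) - p2) := by
            rw [hT]
            exact Finset.sum_Ioc_succ_top (Nat.zero_le n) _
          have ha : a (n+1) ≤ p0 := hbound _ (Finset.mem_Icc.mpr ⟨Nat.succ_le_succ (Nat.zero_le n), hn⟩)
          have hTn := ih' n (le_refl n)
          calc T (n+1) = T n + (a (n+1) - p2) := hstep
            _ ≤ (((Finset.Icc 1 n).filter (fun j => ∀ m < j, T m ≤ T j)).card : ℝ) * (p0 - p2)
                + (p0 - p2) := by linarith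
            _ = ((((Finset.Icc 1 n).filter (fun j => ∀ m < j, T m ≤ T j)).card : ℝ) + 1)
                * (p0 - p2) := by ring
            _ ≤ _ := mul_le_mul_of_nonneg_right hcard' (le_of_lt hc)
        · -- not a record: bounded by an earlier value
          push_neg at hrec
          obtain ⟨m, hm, hTm⟩ := hrec
          calc T (n+1) ≤ T m := le_of_lt hTm
            _ ≤ _ := ih' m (Nat.lt_succ_iff.mp hm)
            _ ≤ _ := mul_le_mul_of_nonneg_right hcard (le_of_lt hc)
  refine ⟨P, Finset.filter_subset _ _, ?_, ?_⟩
  · -- cardinality bound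
    have hTN : (N:ℝ) * (p1 - p2) ≤ T N := by
      have hNpos : (0:ℝ) < N := by exact_mod_cast hN
      have hsum : (N:ℝ) * p1 ≤ ∑ i ∈ Finset.Icc 1 N, a i := by
        have := (le_div_iff₀ hNpos).mp havg
        linarith [this]
      have hTNeq : T N = (∑ i ∈ Finset.Icc 1 N, a i) - N * p2 := by
        simp only [hT, ← hIcc, Finset.sum_sub_distrib, Finset.sum_const, Nat.card_Icc,
          nsmul_eq_mul]
        norm_num
      rw [hTNeq]; linarith
    have hPle := key N (le_refl N) N (le_refl N)
    rw [← hP] at hPle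
    have h1N : (1:ℝ) ≤ N := by exact_mod_cast hN
    have hPcard : (N:ℝ) * (p1 - p2) ≤ (P.card : ℝ) * (p0 - p2) := le_trans hTN hPle
    rw [div_mul_eq_mul_div, div_lt_iff₀ (by positivity)]
    nlinarith [hPcard, h1N, sub_pos.mpr h12]
  · -- Pliss property
    intro j hj n hn
    have hj' := Finset.mem_filter.mp hj
    have hTle : T n ≤ T j := hj'.2 n hn
    have hsplit : T n + ∑ i ∈ Finset.Ioc n j, (a i - p2) = T j := by
      rw [hT]
      exact Finset.sum_Ioc_consecutive _ (Nat.zero_le n) (le_of_lt hn)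
    have hpos : (0:ℝ) < (j:ℝ) - n := by
      have : (n:ℝ) < j := by exact_mod_cast hn
      linarith
    have hcast : ((j - n : ℕ) : ℝ) = (j:ℝ) - n := by
      rw [Nat.cast_sub (le_of_lt hn)]
    have hsum : ∑ i ∈ Finset.Ioc n j, (a i - p2) =
        (∑ i ∈ Finset.Ioc n j, a i) - ((j:ℝ) - n) * p2 := by
      rw [Finset.sum_sub_distrib, Finset.sum_const, Nat.card_Ioc, nsmul_eq_mul, hcast]
    rw [le_div_iff₀ hpos, Finset.Icc_add_one_left_eq_Ioc]
    nlinarith [hTle, hsplit, hsum]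
end

section
/- Given constants p_0 ≥ p_1 > p_2 > 0, there exists ρ = ρ(p_0,p_1,p_2) > 0 such that for any infinite sequence (a_n)_{n≥1} of real numbers with |a_i| ≤ p_0 for all i and limsup_{n→∞} (1/n)∑_{i=1}^n a_i ≤ p_2, there is a subset K ⊂ ℕ of upper density at least ρ (i.e. limsup_{n→∞} #([1,n]∩K)/n ≥ ρ) such that for every k ∈ K and every n ∈ ℕ one has ∑_{i=0}^{n-1} a_{i+k} ≤ n p_1. -/
open Filter
open scoped Classical

private lemma sum_shift_aux (a : ℕ → ℝ) (m n : ℕ) :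
    ∑ i ∈ Finset.range n, a (i + (m + 1)) =
      (∑ i ∈ Finset.Icc 1 (m + n), a i) - ∑ i ∈ Finset.Icc 1 m, a i := by
  induction n with
  | zero => simp
  | succ n ih =>
      rw [Finset.sum_range_succ, ih, show m + (n+1) = (m+n) + 1 by ring,
        Finset.sum_Icc_succ_top (by omega : 1 ≤ m + n + 1)]
      ring_nf

/-- The upper density of a set `K ⊆ ℕ`: `limsup_{n→∞} #([1,n] ∩ K)/n`. -/
noncomputable def upperDensity (K : Set ℕ) : ℝ :=
  Filter.limsup (fun n : ℕ => (((Finset.Icc 1 n).filter (fun i => i ∈ K)).card : ℝ) / n)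
    Filter.atTop

/-- Given `p₀ ≥ p₁ > p₂ > 0`, there is `ρ > 0` such that for any sequence `(aₙ)` with
`|aᵢ| ≤ p₀` and `limsup (1/n)∑_{i=1}^n aᵢ ≤ p₂`, there is a set `K ⊆ ℕ` of upper
density at least `ρ` such that `∑_{i=0}^{n-1} a_{i+k} ≤ n p₁` for every `k ∈ K`, `n ∈ ℕ`. -/
theorem pliss_infinite (p0 p1 p2 : ℝ) (h01 : p1 ≤ p0) (h12 : p2 < p1) (h2 : 0 < p2) :
    ∃ ρ > (0 : ℝ), ∀ a : ℕ → ℝ, (∀ i, |a i| ≤ p0) →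
      Filter.limsup (fun n : ℕ => (∑ i ∈ Finset.Icc 1 n, a i) / n) Filter.atTop ≤ p2 →
      ∃ K : Set ℕ, ρ ≤ upperDensity K ∧
        ∀ k ∈ K, ∀ n : ℕ, ∑ i ∈ Finset.range n, a (i + k) ≤ n * p1 := by
  have hp01 : (0:ℝ) < p0 + p1 := by linarith
  refine ⟨(p1 - p2) / (2 * (p0 + p1)), div_pos (by linarith) (by linarith), ?_⟩
  intro a ha hlim
  set ρ := (p1 - p2) / (2 * (p0 + p1)) with hρ
  have hρ1 : ρ ≤ 1 := by
    rw [hρ, div_le_one (by linarith)]; linarith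
  set q : ℝ := (p1 + p2) / 2 with hq
  have hq2 : p2 < q := by rw [hq]; linarith
  have hq1 : q < p1 := by rw [hq]; linarith
  set S : ℕ → ℝ := fun n => ∑ i ∈ Finset.Icc 1 n, a i with hS
  set b : ℕ → ℝ := fun n => S n - n * p1 with hb
  have hSbound : ∀ n, S n ≤ n * p0 := by
    intro n
    calc S n ≤ ∑ i ∈ Finset.Icc 1 n, |a i| :=
          Finset.sum_le_sum fun i _ => le_abs_self _
      _ ≤ ∑ _i ∈ Finset.Icc 1 n, p0 := Finset.sum_le_sum fun i _ => ha i
      _ = n * p0 := by rw [Finset.sum_const, Nat.card_Icc]; simp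
  have hbdd : IsBoundedUnder (· ≤ ·) atTop (fun n : ℕ => S n / n) := by
    refine isBoundedUnder_of ⟨p0, fun n => ?_⟩
    rcases Nat.eq_zero_or_pos n with h | h
    · simp [h]; linarith
    · rw [div_le_iff₀ (by exact_mod_cast h)]
      exact (hSbound n).trans (by ring_nf; exact le_refl _)
  have hev : ∀ᶠ n : ℕ in atTop, S n / n < q :=
    eventually_lt_of_limsup_lt (lt_of_le_of_lt hlim hq2) hbdd
  obtain ⟨N0, hN0⟩ := eventually_atTop.mp hev
  have hSq : ∀ n, max N0 1 ≤ n → S n ≤ n * q := by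
    intro n hn
    have h1 : 1 ≤ n := le_trans (le_max_right _ _) hn
    have hn0 : (0:ℝ) < n := by exact_mod_cast h1
    have := hN0 n (le_trans (le_max_left _ _) hn)
    rw [div_lt_iff₀ hn0] at this
    linarith
  -- b tends to -∞
  have hbbot : Tendsto b atTop atBot := by
    have hlin : Tendsto (fun n : ℕ => (n:ℝ) * (q - p1)) atTop atBot :=
      Tendsto.atTop_mul_const_of_neg (by linarith) tendsto_natCast_atTop_atTop
    refine tendsto_atBot_mono' atTop ?_ hlin
    filter_upwards [eventually_ge_atTop (max N0 1)] with n hn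
    have := hSq n hn
    simp only [hb]
    ring_nf
    nlinarith [hSq n hn]
  -- forward maxima exist beyond any point
  have hmax : ∀ m : ℕ, ∃ j, m ≤ j ∧ ∀ i, m ≤ i → b i ≤ b j := by
    intro m
    obtain ⟨N, hN⟩ := eventually_atTop.mp (hbbot.eventually (eventually_le_atBot (b m - 1)))
    obtain ⟨j, hjT, hj⟩ := Finset.exists_max_image (Finset.Icc m (max N m)) b
      ⟨m, by simp [Finset.mem_Icc]⟩
    rw [Finset.mem_Icc] at hjT
    refine ⟨j, hjT.1, fun i hi => ?_⟩
    by_cases hiN : i ≤ max N m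
    · exact hj i (Finset.mem_Icc.mpr ⟨hi, hiN⟩)
    · have h1 : b i ≤ b m - 1 := hN i (le_trans (le_max_left _ _) (le_of_not_ge hiN))
      have h2 : b m ≤ b j := hj m (by simp [Finset.mem_Icc])
      linarith
  choose f hf hf2 using hmax
  set t : ℕ → ℕ := fun s => Nat.rec (motive := fun _ => ℕ) (f 0) (fun _ p => f (p + 1)) s
    with htdef
  have ht0 : t 0 = f 0 := rfl
  have htsucc : ∀ s, t (s + 1) = f (t s + 1) := fun s => rfl
  have htmono : StrictMono t := strictMono_nat_of_lt_succ fun s => by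
    rw [htsucc]; exact lt_of_lt_of_le (Nat.lt_succ_self _) (hf _)
  have htM : ∀ s, ∀ i, t s ≤ i → b i ≤ b (t s) := by
    intro s
    cases s with
    | zero => exact fun i _ => hf2 0 i (Nat.zero_le i)
    | succ s =>
        intro i hi
        rw [htsucc] at hi ⊢
        exact hf2 (t s + 1) i ((hf _).trans hi)
  set K : Set ℕ := {k | ∃ m, (∀ i, m ≤ i → b i ≤ b m) ∧ k = m + 1} with hKdef
  refine ⟨K, ?_, ?_⟩
  · -- density bound
    have hb0 : b 0 = 0 := by simp [hb, hS]
    have hchain : ∀ s : ℕ, -(s * (p0 + p1)) ≤ b (t s) := by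
      intro s
      induction s with
      | zero =>
          have h := hf2 0 0 le_rfl
          rw [hb0] at h
          rw [ht0]; push_cast; linarith
      | succ s ih =>
          have h1 : b (t s + 1) ≤ b (t (s + 1)) := by
            rw [htsucc]; exact hf2 (t s + 1) (t s + 1) le_rfl
          have hstep : b (t s + 1) = b (t s) + a (t s + 1) - p1 := by
            simp only [hb, hS]
            rw [Finset.sum_Icc_succ_top (by omega : 1 ≤ t s + 1)]
            push_cast; ring
          have h3 : -p0 ≤ a (t s + 1) := (abs_le.mp (ha (t s + 1))).1
          push_cast
          push_cast at ih
          linarith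
    unfold upperDensity
    refine le_limsup_of_frequently_le ?_ ?_
    · rw [frequently_atTop]
      intro N
      set s := max N (max N0 1) with hsdef
      have hts : s ≤ t s := htmono.le_apply
      have htsN0 : max N0 1 ≤ t s := le_trans (le_max_right _ _) hts
      refine ⟨t s + 1, by omega, ?_⟩
      have htpos : (0:ℝ) < (t s : ℝ) + 1 := by positivity
      -- card bound
      have hsub : Finset.image (fun i => t i + 1) (Finset.range (s + 1)) ⊆
          (Finset.Icc 1 (t s + 1)).filter (fun i => i ∈ K) := by
        intro x hx
        simp only [Finset.mem_image, Finset.mem_range] at hx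
        obtain ⟨i, hi, rfl⟩ := hx
        rw [Finset.mem_filter, Finset.mem_Icc]
        refine ⟨⟨by omega, by have := htmono.monotone (by omega : i ≤ s); omega⟩,
          ⟨t i, htM i, rfl⟩⟩
      have hcard : s + 1 ≤ ((Finset.Icc 1 (t s + 1)).filter (fun i => i ∈ K)).card := by
        calc s + 1 = (Finset.image (fun i => t i + 1) (Finset.range (s + 1))).card := by
              rw [Finset.card_image_of_injective _ (fun x y hxy => htmono.injective (by omega))]
              simp
          _ ≤ _ := Finset.card_le_card hsub
      -- ρ * t s ≤ s
      have hbup : b (t s) ≤ (t s : ℝ) * q - (t s : ℝ) * p1 := by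
        have := hSq (t s) htsN0
        simp only [hb]; linarith
      have hkey : ρ * (t s : ℝ) ≤ s := by
        have hc := hchain s
        have h5 : (t s : ℝ) * (p1 - p2) ≤ (s : ℝ) * (2 * (p0 + p1)) := by
          rw [hq] at hbup
          clear hsub hcard hKdef; clear_value s K t b S q ρ
          linarith
        rw [hρ, div_mul_eq_mul_div, div_le_iff₀ (by linarith)]
        linarith [h5]
      have hρn : ρ * ((t s : ℝ) + 1) ≤ (s : ℝ) + 1 := by nlinarith
      have : ρ ≤ ((s : ℝ) + 1) / ((t s : ℝ) + 1) := by
        rw [le_div_iff₀ htpos]; linarith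
      refine this.trans ?_
      have : ((s : ℝ) + 1) ≤ (((Finset.Icc 1 (t s + 1)).filter (fun i => i ∈ K)).card : ℝ) := by
        exact_mod_cast hcard
      push_cast
      gcongr
    · refine isBoundedUnder_of ⟨1, fun n => ?_⟩
      rcases Nat.eq_zero_or_pos n with h | h
      · simp [h]
      · rw [div_le_one (by exact_mod_cast h)]
        have := Finset.card_filter_le (Finset.Icc 1 n) (fun i => i ∈ K)
        have h2 : (Finset.Icc 1 n).card = n := by rw [Nat.card_Icc]; omega
        exact_mod_cast h2 ▸ this
  · -- Pliss property
    rintro k ⟨m, hm, rfl⟩ n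
    have key : b (m + n) ≤ b m := hm (m + n) (Nat.le_add_right m n)
    rw [sum_shift_aux]
    simp only [hb] at key
    have : S (m + n) - S m ≤ (n : ℝ) * p1 := by push_cast at key ⊢; linarith
    simpa [hS] using this
end

section
/- Let 𝒦 be a compact metric space, ν a finite measure on 𝒦 × 𝔻^k (𝔻^k the k-dimensional closed unit ball), and ν̂ the marginal of ν on 𝒦. Suppose there exists C > 0 such that for every open set ξ ⊂ 𝒦 with ν̂(∂ξ) = 0 and every open set η ⊂ 𝔻^k, ν(ξ × η) ≤ C · Leb_{𝔻^k}(η) · ν̂(ξ). Then ν has absolutely continuous conditional measures along the vertical fibers {x} × 𝔻^k, with densities bounded above by C: i.e. ν(A) = ∫∫_A ρ(x,y) dLeb(y) dν̂(x) for some measurable ρ with 0 ≤ ρ ≤ C. -/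
open MeasureTheory
open scoped ENNReal ProbabilityTheory

private lemma aux_dom {E : Type*} [TopologicalSpace E] [MeasurableSpace E] [BorelSpace E]
    (τ L : Measure E) [Measure.OuterRegular L] [IsFiniteMeasure L]
    (c : ℝ≥0∞) (hc : c ≠ ∞) (e : ℕ → Set E) (he : ∀ n, IsOpen (e n))
    (hbasis : ∀ U : Set E, IsOpen U → ∃ T, T ⊆ Set.range e ∧ U = ⋃₀ T)
    (hF : ∀ F : Finset ℕ, τ (⋃ n ∈ F, e n) ≤ c * L (⋃ n ∈ F, e n)) :
    ∀ s : Set E, MeasurableSet s → τ s ≤ c * L s := by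
  classical
  have hopen : ∀ U : Set E, IsOpen U → τ U ≤ c * L U := by
    intro U hU
    obtain ⟨T, hT, rfl⟩ := hbasis U hU
    set W : ℕ → Set E := fun N => ⋃ n ∈ Finset.filter (fun n => e n ∈ T) (Finset.range N), e n
      with hWdef
    have hWmono : Monotone W := by
      intro a b hab
      refine Set.iUnion₂_subset fun n hn => Set.subset_iUnion₂ (s := fun n _ => e n) n ?_
      rw [Finset.mem_filter, Finset.mem_range] at hn ⊢
      exact ⟨hn.1.trans_le hab, hn.2⟩
    have hWU : ⋃₀ T = ⋃ N, W N := by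
      ext x
      simp only [Set.mem_sUnion, Set.mem_iUnion, hWdef, Finset.mem_filter, Finset.mem_range,
        exists_prop]
      constructor
      · rintro ⟨t, htT, hxt⟩
        obtain ⟨n, rfl⟩ := hT htT
        exact ⟨n + 1, n, ⟨n.lt_succ_self, htT⟩, hxt⟩
      · rintro ⟨N, n, ⟨_, hnT⟩, hxn⟩
        exact ⟨e n, hnT, hxn⟩
    rw [hWU, hWmono.directed_le.measure_iUnion]
    refine iSup_le fun N => (hF _).trans ?_
    refine mul_le_mul_right (measure_mono ?_) c
    exact Set.subset_iUnion W N
  intro s hs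
  refine ENNReal.le_of_forall_pos_le_add fun ε hε hlt => ?_
  have hδ : (↑ε : ℝ≥0∞) / c ≠ 0 := by
    simp only [ne_eq, ENNReal.div_eq_zero_iff, ENNReal.coe_eq_zero, not_or]
    exact ⟨hε.ne', hc⟩
  obtain ⟨U, hsU, hUo, hUle⟩ := Set.exists_isOpen_le_add s L hδ
  calc τ s ≤ τ U := measure_mono hsU
    _ ≤ c * L U := hopen U hUo
    _ ≤ c * (L s + ↑ε / c) := mul_le_mul_right hUle c
    _ = c * L s + c * (↑ε / c) := mul_add _ _ _
    _ ≤ c * L s + ↑ε := add_le_add le_rfl ENNReal.mul_div_le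

/-- If a finite measure `ν` on `𝒦 × 𝔻^k` (supported on `𝒦 × 𝔻^k`) satisfies
`ν(ξ × η) ≤ C · Leb(η) · ν̂(ξ)` for every open `ξ ⊆ 𝒦` with `ν̂(∂ξ) = 0` and every open
`η`, then `ν` has absolutely continuous conditional measures along the vertical fibers,
with density bounded above by `C`: `ν = (ν̂ × Leb_{𝔻^k}).withDensity ρ` with `ρ ≤ C`. -/
theorem abs_cont_conditional_of_rectangle_bound
    {K : Type*} [MetricSpace K] [CompactSpace K] [MeasurableSpace K] [BorelSpace K]
    {k : ℕ}
    (ν : Measure (K × EuclideanSpace ℝ (Fin k))) [IsFiniteMeasure ν]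
    (C : ℝ) (hC : 0 < C)
    (D : Set (EuclideanSpace ℝ (Fin k))) (hD : D = Metric.closedBall 0 1)
    (hsupp : ν (Set.univ ×ˢ Dᶜ) = 0)
    (h : ∀ ξ : Set K, IsOpen ξ → Measure.map Prod.fst ν (frontier ξ) = 0 →
      ∀ η : Set (EuclideanSpace ℝ (Fin k)), IsOpen η →
        ν (ξ ×ˢ η) ≤ ENNReal.ofReal C * (volume.restrict D) η
          * Measure.map Prod.fst ν ξ) :
    ∃ ρ : K × EuclideanSpace ℝ (Fin k) → ℝ≥0∞, Measurable ρ ∧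
      (∀ p, ρ p ≤ ENNReal.ofReal C) ∧
      ν = ((Measure.map Prod.fst ν).prod (volume.restrict D)).withDensity ρ := by
  classical
  set L : Measure (EuclideanSpace ℝ (Fin k)) := volume.restrict D with hL
  set νh : Measure K := Measure.map Prod.fst ν with hνh
  set C' : ℝ≥0∞ := ENNReal.ofReal C with hC'
  have hC'top : C' ≠ ∞ := ENNReal.ofReal_ne_top
  haveI hLfin : IsFiniteMeasure L := by
    constructor
    rw [hL, Measure.restrict_apply_univ, hD]
    exact (isCompact_closedBall 0 1).measure_lt_top
  set μ : Measure (K × EuclideanSpace ℝ (Fin k)) := νh.prod L with hμ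
  -- Step B: bound for all open rectangles
  have hB : ∀ ξ : Set K, IsOpen ξ → ∀ η : Set (EuclideanSpace ℝ (Fin k)), IsOpen η →
      ν (ξ ×ˢ η) ≤ C' * L η * νh ξ := by
    intro ξ hξ η hη
    by_cases huniv : ξ = Set.univ
    · subst huniv
      exact h Set.univ isOpen_univ (by simp) η hη
    have hne : (ξᶜ).Nonempty := Set.nonempty_compl.mpr huniv
    set f : K → ℝ := fun x => Metric.infDist x ξᶜ with hf
    have hfc : Continuous f := Metric.continuous_infDist_pt _
    have hcount : Set.Countable {t : ℝ | 0 < νh {x | f x = t}} :=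
      Measure.countable_meas_level_set_pos hfc.measurable
    have hu : ∀ n : ℕ, ∃ t : ℝ, t ∈ Set.Ioo (0:ℝ) (1 / (n + 1)) ∧ νh {x | f x = t} = 0 := by
      intro n
      have hIoo : ¬ (Set.Ioo (0 : ℝ) (1 / (n + 1))).Countable := by
        intro hcnt
        have h1 := Cardinal.mk_Ioo_real (show (0 : ℝ) < 1 / (n + 1) by positivity)
        have h2 := hcnt.le_aleph0
        rw [h1] at h2
        exact absurd h2 (not_le.mpr Cardinal.aleph0_lt_continuum)
      have hnotsub : ¬ (Set.Ioo (0 : ℝ) (1 / (n + 1)) ⊆ {t | 0 < νh {x | f x = t}}) :=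
        fun hsub => hIoo (hcount.mono hsub)
      obtain ⟨t, ht, htn⟩ := Set.not_subset.mp hnotsub
      refine ⟨t, ht, ?_⟩
      simpa [pos_iff_ne_zero] using htn
    choose u hu1 hu2 using hu
    set ξn : ℕ → Set K := fun n => f ⁻¹' Set.Ioi (u n) with hξn
    have hopen : ∀ n, IsOpen (ξn n) := fun n => isOpen_Ioi.preimage hfc
    have hfr : ∀ n, νh (frontier (ξn n)) = 0 := by
      intro n
      refine measure_mono_null ?_ (hu2 n)
      have hsub := frontier_lt_subset_eq (continuous_const (y := u n)) hfc
      intro x hx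
      have : u n = f x := hsub hx
      exact this.symm
    have hsub : ∀ n, ξn n ⊆ ξ := by
      intro n x hx
      by_contra hxc
      have h0 : f x = 0 := Metric.infDist_zero_of_mem hxc
      have hpos := (hu1 n).1
      simp only [hξn, Set.mem_preimage, Set.mem_Ioi] at hx
      linarith [hx]
    have hcover : ξ ×ˢ η = ⋃ n, (ξn n ×ˢ η) := by
      rw [← Set.iUnion_prod_const]
      congr 1
      apply subset_antisymm
      · intro x hx
        have hpos : 0 < f x := by
          rw [hf]
          exact (hξ.isClosed_compl.notMem_iff_infDist_pos hne).mp (fun hh => hh hx)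
        obtain ⟨n, hn⟩ := exists_nat_one_div_lt hpos
        refine Set.mem_iUnion.mpr ⟨n, ?_⟩
        simp only [hξn, Set.mem_preimage, Set.mem_Ioi]
        exact lt_trans ((hu1 n).2) hn
      · exact Set.iUnion_subset hsub
    have hdir : Directed (· ⊆ ·) (fun n => (ξn n) ×ˢ η) := by
      intro n m
      have hmin : 0 < min (u n) (u m) := lt_min (hu1 n).1 (hu1 m).1
      obtain ⟨p, hp⟩ := exists_nat_one_div_lt hmin
      have hpn : u p ≤ u n := le_of_lt (lt_of_lt_of_le (lt_trans (hu1 p).2 hp) (min_le_left _ _))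
      have hpm : u p ≤ u m := le_of_lt (lt_of_lt_of_le (lt_trans (hu1 p).2 hp) (min_le_right _ _))
      refine ⟨p, Set.prod_mono ?_ le_rfl, Set.prod_mono ?_ le_rfl⟩
      · exact Set.preimage_mono (Set.Ioi_subset_Ioi hpn)
      · exact Set.preimage_mono (Set.Ioi_subset_Ioi hpm)
    rw [hcover, hdir.measure_iUnion]
    refine iSup_le fun n => ?_
    exact (h (ξn n) (hopen n) (hfr n) η hη).trans
      (mul_le_mul_right (measure_mono (hsub n)) _)
  -- Step D: bound for arbitrary ξ, open η
  have hD2 : ∀ ξ : Set K, ∀ η : Set (EuclideanSpace ℝ (Fin k)), IsOpen η → ν (ξ ×ˢ η) ≤ C' * L η * νh ξ := by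
    intro ξ η hη
    refine ENNReal.le_of_forall_pos_le_add fun ε hε hlt => ?_
    have hfin : C' * L η ≠ ∞ := ENNReal.mul_ne_top hC'top (measure_ne_top L η)
    have hδ : (↑ε : ℝ≥0∞) / (C' * L η) ≠ 0 := by
      simp only [ne_eq, ENNReal.div_eq_zero_iff, ENNReal.coe_eq_zero, not_or]
      exact ⟨hε.ne', hfin⟩
    obtain ⟨U, hsU, hUopen, hUle⟩ := Set.exists_isOpen_le_add ξ νh hδ
    calc ν (ξ ×ˢ η) ≤ ν (U ×ˢ η) := measure_mono (Set.prod_mono hsU le_rfl)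
      _ ≤ C' * L η * νh U := hB U hUopen η hη
      _ ≤ C' * L η * (νh ξ + ↑ε / (C' * L η)) := mul_le_mul_right hUle _
      _ = C' * L η * νh ξ + (C' * L η) * (↑ε / (C' * L η)) := mul_add _ _ _
      _ ≤ C' * L η * νh ξ + ↑ε := add_le_add le_rfl ENNReal.mul_div_le
  -- disintegration
  set κ := ν.condKernel with hκ
  have hdis : νh ⊗ₘ κ = ν := ν.disintegrate κ
  have hker : ∀ η : Set (EuclideanSpace ℝ (Fin k)), IsOpen η → ∀ᵐ x ∂νh, κ x η ≤ C' * L η := by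
    intro η hη
    refine ae_le_of_forall_setLIntegral_le_of_sigmaFinite
      (κ.measurable_coe hη.measurableSet) fun s hs _ => ?_
    rw [setLIntegral_const]
    have heq : ∫⁻ x in s, κ x η ∂νh = ν (s ×ˢ η) := by
      rw [← hdis, Measure.compProd_apply_prod hs hη.measurableSet]
    rw [heq]
    exact hD2 s η hη
  -- countable basis
  set S : Set (Set (EuclideanSpace ℝ (Fin k))) := insert ∅ (TopologicalSpace.countableBasis (EuclideanSpace ℝ (Fin k))) with hS
  have hScount : S.Countable := (TopologicalSpace.countable_countableBasis (EuclideanSpace ℝ (Fin k))).insert ∅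
  obtain ⟨e, he⟩ := hScount.exists_eq_range ⟨∅, Set.mem_insert _ _⟩
  have heopen : ∀ n, IsOpen (e n) := by
    intro n
    have hmem : e n ∈ S := he ▸ Set.mem_range_self n
    rcases hmem with hh | hh
    · rw [hh]; exact isOpen_empty
    · exact TopologicalSpace.isOpen_of_mem_countableBasis hh
  have hbasis : ∀ U : Set (EuclideanSpace ℝ (Fin k)), IsOpen U → ∃ T, T ⊆ Set.range e ∧ U = ⋃₀ T := by
    intro U hU
    obtain ⟨T, hTsub, hTeq⟩ := (TopologicalSpace.isBasis_countableBasis (EuclideanSpace ℝ (Fin k))).open_eq_sUnion hU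
    exact ⟨T, fun t ht => he ▸ Set.mem_insert_of_mem _ (hTsub ht), hTeq⟩
  have hA : ∀ᵐ x ∂νh, ∀ F : Finset ℕ, κ x (⋃ n ∈ F, e n) ≤ C' * L (⋃ n ∈ F, e n) := by
    rw [ae_all_iff]
    intro F
    exact hker _ (isOpen_biUnion fun n _ => heopen n)
  have hfiber : ∀ᵐ x ∂νh, ∀ s : Set (EuclideanSpace ℝ (Fin k)), MeasurableSet s → κ x s ≤ C' * L s := by
    filter_upwards [hA] with x hx
    exact aux_dom (κ x) L C' hC'top e heopen hbasis hx
  -- domination ν ≤ C' • μ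
  have hdom : ∀ s : Set (K × EuclideanSpace ℝ (Fin k)), MeasurableSet s → ν s ≤ C' * μ s := by
    intro s hs
    rw [← hdis, Measure.compProd_apply hs, hμ, Measure.prod_apply hs,
      ← lintegral_const_mul' _ _ hC'top]
    refine lintegral_mono_ae ?_
    filter_upwards [hfiber] with x hx
    exact hx _ (measurable_prodMk_left hs)
  have hac : ν ≪ μ := by
    refine Measure.AbsolutelyContinuous.mk fun s hs h0 => ?_
    have hh := hdom s hs
    rw [h0, mul_zero] at hh
    exact le_antisymm hh zero_le
  haveI : IsFiniteMeasure μ := by rw [hμ]; infer_instance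
  haveI : ν.HaveLebesgueDecomposition μ := Measure.haveLebesgueDecomposition_of_finiteMeasure
  have hwd : μ.withDensity (ν.rnDeriv μ) = ν := Measure.withDensity_rnDeriv_eq ν μ hac
  have hmeas := Measure.measurable_rnDeriv ν μ
  have hrle : ν.rnDeriv μ ≤ᵐ[μ] fun _ => C' := by
    refine ae_le_of_forall_setLIntegral_le_of_sigmaFinite hmeas fun s hs _ => ?_
    rw [setLIntegral_const, ← withDensity_apply _ hs, hwd]
    exact hdom s hs
  refine ⟨fun p => min (ν.rnDeriv μ p) C', hmeas.min measurable_const,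
    fun p => min_le_right _ _, ?_⟩
  have hcongr : μ.withDensity (fun p => min (ν.rnDeriv μ p) C')
      = μ.withDensity (ν.rnDeriv μ) := by
    refine withDensity_congr_ae ?_
    filter_upwards [hrle] with p hp
    exact min_eq_left hp
  rw [hcongr, hwd]
end

section
/- Let 𝒦 be a compact metric space and ν, ν_n finite measures on 𝒦 × 𝔻^k with ν_n → ν weakly and with marginals ν̂_n → ν̂ weakly on 𝒦. If there is C > 0 such that ν_n(ξ × η) ≤ C · Leb(η) · ν̂_n(ξ) for all n, all open ξ ⊂ 𝒦, and all open η ⊂ 𝔻^k, then for every open ξ with ν̂(∂ξ) = 0 and every open η ⊂ 𝔻^k one has ν(ξ × η) ≤ C · Leb(η) · ν̂(ξ); consequently ν has absolutely continuous conditional measures along vertical fibers with density bounded by C. -/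
open MeasureTheory Filter
open scoped ENNReal NNReal BoundedContinuousFunction Topology

section Aux

variable {Ω : Type*} [MeasurableSpace Ω]

/-- limsup over closed sets from weak convergence of finite measures. -/
lemma aux_limsup_closed [TopologicalSpace Ω] [OpensMeasurableSpace Ω] [HasOuterApproxClosed Ω]
    (μ : Measure Ω) [IsFiniteMeasure μ] (μs : ℕ → Measure Ω) [∀ n, IsFiniteMeasure (μs n)]
    (hw : ∀ f : Ω →ᵇ ℝ, Tendsto (fun n => ∫ x, f x ∂(μs n)) atTop (𝓝 (∫ x, f x ∂μ)))
    {F : Set Ω} (hF : IsClosed F) :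
    atTop.limsup (fun n => μs n F) ≤ μ F := by
  let μF : FiniteMeasure Ω := ⟨μ, inferInstance⟩
  let μsF : ℕ → FiniteMeasure Ω := fun n => ⟨μs n, inferInstance⟩
  have hconv : Tendsto μsF atTop (𝓝 μF) :=
    FiniteMeasure.tendsto_iff_forall_integral_tendsto.mpr hw
  exact FiniteMeasure.limsup_measure_closed_le_of_tendsto hconv hF

/-- mass convergence from weak convergence of finite measures. -/
lemma aux_mass_tendsto [TopologicalSpace Ω] [OpensMeasurableSpace Ω]
    (μ : Measure Ω) [IsFiniteMeasure μ] (μs : ℕ → Measure Ω) [∀ n, IsFiniteMeasure (μs n)]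
    (hw : ∀ f : Ω →ᵇ ℝ, Tendsto (fun n => ∫ x, f x ∂(μs n)) atTop (𝓝 (∫ x, f x ∂μ))) :
    Tendsto (fun n => μs n Set.univ) atTop (𝓝 (μ Set.univ)) := by
  have h1 := hw 1
  simp only [BoundedContinuousFunction.coe_one, Pi.one_apply, integral_const, smul_eq_mul,
    mul_one] at h1
  rw [← ENNReal.tendsto_toReal_iff (fun n => measure_ne_top (μs n) _) (measure_ne_top μ _)]
  exact h1

/-- liminf over open sets from weak convergence of finite measures. -/
lemma aux_liminf_open [TopologicalSpace Ω] [OpensMeasurableSpace Ω] [HasOuterApproxClosed Ω]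
    (μ : Measure Ω) [IsFiniteMeasure μ] (μs : ℕ → Measure Ω) [∀ n, IsFiniteMeasure (μs n)]
    (hw : ∀ f : Ω →ᵇ ℝ, Tendsto (fun n => ∫ x, f x ∂(μs n)) atTop (𝓝 (∫ x, f x ∂μ)))
    {G : Set Ω} (hG : IsOpen G) :
    μ G ≤ atTop.liminf (fun n => μs n G) := by
  have hclosed := aux_limsup_closed μ μs hw (isClosed_compl_iff.mpr hG)
  have hmass := aux_mass_tendsto μ μs hw
  apply ENNReal.le_of_forall_pos_le_add
  intro ε hε _
  have hε2 : (0 : ℝ≥0∞) < (ε : ℝ≥0∞) / 2 := by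
    simp [ENNReal.div_pos_iff, hε.ne']
  -- eventually `μs n Gᶜ ≤ μ Gᶜ + ε/2`
  have ev1 : ∀ᶠ n in atTop, μs n Gᶜ < μ Gᶜ + ε / 2 :=
    eventually_lt_of_limsup_lt
      (lt_of_le_of_lt hclosed (ENNReal.lt_add_right (measure_ne_top μ _) hε2.ne'))
  -- eventually `μ univ ≤ μs n univ + ε/2`
  have ev2 : ∀ᶠ n in atTop, μ Set.univ ≤ μs n Set.univ + ε / 2 := by
    rcases le_or_gt (μ Set.univ) (ε / 2) with hle | hlt
    · exact Filter.Eventually.of_forall fun n => hle.trans le_add_self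
    · have h' : μ Set.univ - ε / 2 < μ Set.univ :=
        ENNReal.sub_lt_self (measure_ne_top μ _) (by exact (hε2.trans_le hlt.le).ne') hε2.ne'
      filter_upwards [hmass.eventually_const_lt h'] with n hn
      rw [ENNReal.sub_lt_iff_lt_right (ENNReal.div_lt_top ENNReal.coe_ne_top (by norm_num)).ne hlt.le] at hn
      exact hn.le
  have key : ∀ᶠ n in atTop, μ G - ε ≤ μs n G := by
    filter_upwards [ev1, ev2] with n h1 h2
    rw [tsub_le_iff_right]
    have e1 : μ G + μ Gᶜ = μ Set.univ := measure_add_measure_compl hG.measurableSet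
    have e2 : μs n G + μs n Gᶜ = μs n Set.univ := measure_add_measure_compl hG.measurableSet
    have : μ G + μ Gᶜ ≤ (μs n G + ε) + μ Gᶜ := by
      calc μ G + μ Gᶜ = μ Set.univ := e1
        _ ≤ μs n Set.univ + ε / 2 := h2
        _ = μs n G + μs n Gᶜ + ε / 2 := by rw [e2]
        _ ≤ μs n G + (μ Gᶜ + ε / 2) + ε / 2 := by gcongr
        _ = μs n G + μ Gᶜ + (ε / 2 + ε / 2) := by ring
        _ = (μs n G + ε) + μ Gᶜ := by rw [ENNReal.add_halves]; ring
    exact (ENNReal.add_le_add_iff_right (measure_ne_top μ Gᶜ)).mp this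
  have : μ G - ε ≤ atTop.liminf (fun n => μs n G) := le_liminf_of_le (by isBoundedDefault) key
  rwa [tsub_le_iff_right] at this

/-- a radius in `(a,b)` whose cthickening has null frontier. -/
lemma aux_null_frontier_cthickening [PseudoEMetricSpace Ω] [OpensMeasurableSpace Ω]
    (μ : Measure Ω) [SFinite μ] (s : Set Ω) {a b : ℝ} (ha : 0 ≤ a) (hab : a < b) :
    ∃ r ∈ Set.Ioo a b, μ (frontier (Metric.cthickening r s)) = 0 := by
  have mbles : ∀ r : ℝ≥0, MeasurableSet (frontier (Metric.cthickening (r : ℝ) s)) :=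
    fun r => isClosed_frontier.measurableSet
  have disjs := Metric.frontier_cthickening_disjoint (α := Ω) s
  have key := MeasureTheory.Measure.countable_meas_pos_of_disjoint_iUnion (μ := μ) mbles disjs
  have hbad : {r : ℝ | r ∈ Set.Ioo a b ∧ 0 < μ (frontier (Metric.cthickening r s))}.Countable := by
    have hss : {r : ℝ | r ∈ Set.Ioo a b ∧ 0 < μ (frontier (Metric.cthickening r s))} ⊆
        (fun q : ℝ≥0 => (q : ℝ)) ''
          {q : ℝ≥0 | 0 < μ (frontier (Metric.cthickening (q : ℝ) s))} := by
      rintro r ⟨hrIoo, hrpos⟩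
      refine ⟨⟨r, ha.trans hrIoo.1.le⟩, ?_, ?_⟩
      · exact hrpos
      · rfl
    exact (key.image _).mono hss
  have aux := measure_diff_null (s := Set.Ioo a b) (hbad.measure_zero volume)
  have len_pos : 0 < ENNReal.ofReal (b - a) := by simp [hab, sub_pos]
  rw [← Real.volume_Ioo, ← aux] at len_pos
  rcases MeasureTheory.nonempty_of_measure_ne_zero len_pos.ne' with ⟨r, hrIoo, hr⟩
  refine ⟨r, hrIoo, ?_⟩
  by_contra hne
  exact hr ⟨hrIoo, pos_iff_ne_zero.mpr hne⟩

variable {X Y : Type*} [MeasurableSpace X] [MeasurableSpace Y]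

/-- finite unions of measurable rectangles: measure comparison. -/
lemma aux_union_rect (μ₁ μ₂ : Measure (X × Y))
    (h : ∀ A : Set X, ∀ B : Set Y, MeasurableSet A → MeasurableSet B →
      μ₁ (A ×ˢ B) ≤ μ₂ (A ×ˢ B)) :
    ∀ (m : ℕ) (a : ℕ → Set X) (b : ℕ → Set Y), (∀ n, MeasurableSet (a n)) →
      (∀ n, MeasurableSet (b n)) →
      μ₁ (⋃ n ∈ Finset.range m, a n ×ˢ b n) ≤ μ₂ (⋃ n ∈ Finset.range m, a n ×ˢ b n) := by
  intro m
  induction m with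
  | zero => intro a b _ _; simp
  | succ m ih =>
    intro a b ha hb
    set R : Set (X × Y) := a m ×ˢ b m with hR
    set B : Set (X × Y) := ⋃ n ∈ Finset.range m, (a n ∩ (a m)ᶜ) ×ˢ b n with hBdef
    set Cs : Set (X × Y) := ⋃ n ∈ Finset.range m, (a n ∩ a m) ×ˢ (b n ∩ (b m)ᶜ) with hCdef
    have hU : (⋃ n ∈ Finset.range (m + 1), a n ×ˢ b n)
        = R ∪ ⋃ n ∈ Finset.range m, a n ×ˢ b n := by
      rw [Finset.range_add_one]
      simp [Set.union_comm, Set.biUnion_insert, hR]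
    have hsub : (⋃ n ∈ Finset.range (m + 1), a n ×ˢ b n) ⊆ R ∪ (B ∪ Cs) := by
      rintro ⟨x, y⟩ hp
      simp only [Set.mem_iUnion, Finset.mem_range, Set.mem_prod] at hp
      obtain ⟨n, hn, hx, hy⟩ := hp
      rcases Nat.lt_succ_iff_lt_or_eq.mp hn with hn' | rfl
      · by_cases hxm : x ∈ a m
        · by_cases hym : y ∈ b m
          · exact Or.inl ⟨hxm, hym⟩
          · refine Or.inr (Or.inr ?_)
            simp only [hCdef, Set.mem_iUnion, Finset.mem_range, Set.mem_prod]
            exact ⟨n, hn', ⟨hx, hxm⟩, ⟨hy, hym⟩⟩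
        · refine Or.inr (Or.inl ?_)
          simp only [hBdef, Set.mem_iUnion, Finset.mem_range, Set.mem_prod]
          exact ⟨n, hn', ⟨hx, hxm⟩, hy⟩
      · exact Or.inl ⟨hx, hy⟩
    have hBsub : B ⊆ ⋃ n ∈ Finset.range m, a n ×ˢ b n := by
      simp only [hBdef]
      exact Set.iUnion₂_mono fun n _ => Set.prod_mono Set.inter_subset_left subset_rfl
    have hCsub : Cs ⊆ ⋃ n ∈ Finset.range m, a n ×ˢ b n := by
      simp only [hCdef]
      exact Set.iUnion₂_mono fun n _ =>
        Set.prod_mono Set.inter_subset_left Set.inter_subset_left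
    have hmB : MeasurableSet B :=
      MeasurableSet.biUnion (Finset.range m).countable_toSet
        (fun n _ => ((ha n).inter (ha m).compl).prod (hb n))
    have hmC : MeasurableSet Cs :=
      MeasurableSet.biUnion (Finset.range m).countable_toSet
        (fun n _ => ((ha n).inter (ha m)).prod ((hb n).inter (hb m).compl))
    have hdisjRBC : Disjoint R (B ∪ Cs) := by
      rw [Set.disjoint_left]
      rintro ⟨x, y⟩ ⟨hx, hy⟩ hmem
      rcases hmem with hmem | hmem
      · simp only [hBdef, Set.mem_iUnion, Finset.mem_range, Set.mem_prod] at hmem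
        obtain ⟨n, _, ⟨_, hxm⟩, _⟩ := hmem
        exact hxm hx
      · simp only [hCdef, Set.mem_iUnion, Finset.mem_range, Set.mem_prod] at hmem
        obtain ⟨n, _, _, ⟨_, hym⟩⟩ := hmem
        exact hym hy
    have hdisjBC : Disjoint B Cs := by
      rw [Set.disjoint_left]
      rintro ⟨x, y⟩ hmem hmem'
      simp only [hBdef, Set.mem_iUnion, Finset.mem_range, Set.mem_prod] at hmem
      simp only [hCdef, Set.mem_iUnion, Finset.mem_range, Set.mem_prod] at hmem'
      obtain ⟨n, _, ⟨_, hxm⟩, _⟩ := hmem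
      obtain ⟨n', _, ⟨_, hxm'⟩, _⟩ := hmem'
      exact hxm hxm'
    -- IH applied to the modified families
    have hB : μ₁ B ≤ μ₂ B :=
      ih (fun n => a n ∩ (a m)ᶜ) b (fun n => (ha n).inter (ha m).compl) hb
    have hC : μ₁ Cs ≤ μ₂ Cs :=
      ih (fun n => a n ∩ a m) (fun n => b n ∩ (b m)ᶜ)
        (fun n => (ha n).inter (ha m)) (fun n => (hb n).inter (hb m).compl)
    have hR' : μ₁ R ≤ μ₂ R := h _ _ (ha m) (hb m)
    calc μ₁ (⋃ n ∈ Finset.range (m + 1), a n ×ˢ b n)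
        ≤ μ₁ (R ∪ (B ∪ Cs)) := measure_mono hsub
      _ ≤ μ₁ R + (μ₁ B + μ₁ Cs) := (measure_union_le _ _).trans (by gcongr; exact measure_union_le _ _)
      _ ≤ μ₂ R + (μ₂ B + μ₂ Cs) := by gcongr
      _ = μ₂ (R ∪ (B ∪ Cs)) := by
          rw [← measure_union hdisjBC hmC, ← measure_union hdisjRBC (hmB.union hmC)]
      _ ≤ μ₂ (⋃ n ∈ Finset.range (m + 1), a n ×ˢ b n) := by
          apply measure_mono
          rw [hU]
          exact Set.union_subset_union subset_rfl (Set.union_subset hBsub hCsub)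

/-- extension to open sets in a second-countable product. -/
lemma aux_open_rect [TopologicalSpace X] [TopologicalSpace Y] [OpensMeasurableSpace X]
    [OpensMeasurableSpace Y] [SecondCountableTopology X] [SecondCountableTopology Y]
    (μ₁ μ₂ : Measure (X × Y))
    (h : ∀ A : Set X, ∀ B : Set Y, MeasurableSet A → MeasurableSet B →
      μ₁ (A ×ˢ B) ≤ μ₂ (A ×ˢ B))
    {U : Set (X × Y)} (hU : IsOpen U) : μ₁ U ≤ μ₂ U := by
  set 𝒮 : Set (Set (X × Y)) :=
    {t | ∃ A B, IsOpen A ∧ IsOpen B ∧ t = A ×ˢ B ∧ t ⊆ U} with h𝒮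
  have hSopen : ∀ s ∈ 𝒮, IsOpen s := by
    rintro s ⟨A, B, hA, hB, rfl, -⟩
    exact hA.prod hB
  have hcov : ⋃₀ 𝒮 = U := by
    apply Set.Subset.antisymm
    · refine Set.sUnion_subset fun s hs => ?_
      obtain ⟨A, B, -, -, rfl, hsub⟩ := hs
      exact hsub
    · rintro ⟨x, y⟩ hxy
      obtain ⟨A, B, hA, hB, hxA, hyB, hABU⟩ := isOpen_prod_iff.mp hU x y hxy
      exact ⟨A ×ˢ B, ⟨A, B, hA, hB, rfl, hABU⟩, ⟨hxA, hyB⟩⟩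
  obtain ⟨T, hTc, hTsub, hTU⟩ := TopologicalSpace.isOpen_sUnion_countable 𝒮 hSopen
  rw [hcov] at hTU
  rcases T.eq_empty_or_nonempty with rfl | hTne
  · simp only [Set.sUnion_empty] at hTU
    rw [← hTU]
    simp
  obtain ⟨f, hf⟩ := hTc.exists_eq_range hTne
  have hfS : ∀ n, f n ∈ 𝒮 := fun n => hTsub (hf ▸ Set.mem_range_self n)
  choose A B hA hB hfeq hfsub using hfS
  have hUeq : U = ⋃ n, A n ×ˢ B n := by
    rw [← hTU, hf, Set.sUnion_range]
    exact Set.iUnion_congr hfeq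
  set S : ℕ → Set (X × Y) := fun m => ⋃ n ∈ Finset.range m, A n ×ˢ B n with hS
  have hmono : Monotone S := by
    intro i j hij
    refine Set.iUnion₂_subset fun n hn => ?_
    have hn' : n ∈ Finset.range j := Finset.mem_range.mpr
      (lt_of_lt_of_le (Finset.mem_range.mp hn) hij)
    exact Set.subset_biUnion_of_mem (u := fun i => A i ×ˢ B i) hn'
  have hSU : ⋃ m, S m = U := by
    rw [hUeq]
    apply Set.Subset.antisymm
    · exact Set.iUnion_subset fun m => Set.iUnion₂_subset fun n _ =>
        Set.subset_iUnion (fun i => A i ×ˢ B i) n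
    · intro p hp
      obtain ⟨n, hn⟩ := Set.mem_iUnion.mp hp
      exact Set.mem_iUnion.mpr
        ⟨n + 1, Set.mem_biUnion (Finset.mem_coe.mpr (Finset.self_mem_range_succ n)) hn⟩
  have hlim : Tendsto (fun m => μ₁ (S m)) atTop (𝓝 (μ₁ U)) := by
    rw [← hSU]
    exact tendsto_measure_iUnion_atTop hmono
  refine le_of_tendsto hlim (Filter.Eventually.of_forall fun m => ?_)
  calc μ₁ (S m) ≤ μ₂ (S m) :=
        aux_union_rect μ₁ μ₂ h m A B (fun n => (hA n).measurableSet)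
          (fun n => (hB n).measurableSet)
    _ ≤ μ₂ U := measure_mono (by rw [← hSU]; exact Set.subset_iUnion S m)

end Aux

/-- If finite measures `ν_n → ν` weakly on `𝒦 × 𝔻^k` with marginals `ν̂_n → ν̂`
weakly, and each `ν_n` satisfies the rectangle bound
`ν_n(ξ × η) ≤ C · Leb(η) · ν̂_n(ξ)` for all open `ξ, η`, then for every open `ξ` with
`ν̂(∂ξ) = 0` and every open `η` one has `ν(ξ × η) ≤ C · Leb(η) · ν̂(ξ)`; consequently
`ν` has absolutely continuous conditional measures along the vertical fibers with
density bounded by `C`. -/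
theorem rectangle_bound_passes_to_weak_limit
    {K : Type*} [MetricSpace K] [CompactSpace K] [MeasurableSpace K] [BorelSpace K]
    {k : ℕ}
    (ν : Measure (K × EuclideanSpace ℝ (Fin k))) [IsFiniteMeasure ν]
    (νn : ℕ → Measure (K × EuclideanSpace ℝ (Fin k))) (hfin : ∀ n, IsFiniteMeasure (νn n))
    (C : ℝ) (hC : 0 < C)
    (D : Set (EuclideanSpace ℝ (Fin k))) (hD : D = Metric.closedBall 0 1)
    (hsupp : ∀ n, νn n (Set.univ ×ˢ Dᶜ) = 0)
    (hweak : ∀ φ : (K × EuclideanSpace ℝ (Fin k)) →ᵇ ℝ,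
      Tendsto (fun n => ∫ p, φ p ∂(νn n)) atTop (nhds (∫ p, φ p ∂ν)))
    (hweakfst : ∀ ψ : K →ᵇ ℝ,
      Tendsto (fun n => ∫ x, ψ x ∂(Measure.map Prod.fst (νn n))) atTop
        (nhds (∫ x, ψ x ∂(Measure.map Prod.fst ν))))
    (h : ∀ n, ∀ ξ : Set K, IsOpen ξ →
      ∀ η : Set (EuclideanSpace ℝ (Fin k)), IsOpen η →
        νn n (ξ ×ˢ η) ≤ ENNReal.ofReal C * (volume.restrict D) η
          * Measure.map Prod.fst (νn n) ξ) :
    (∀ ξ : Set K, IsOpen ξ → Measure.map Prod.fst ν (frontier ξ) = 0 →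
      ∀ η : Set (EuclideanSpace ℝ (Fin k)), IsOpen η →
        ν (ξ ×ˢ η) ≤ ENNReal.ofReal C * (volume.restrict D) η
          * Measure.map Prod.fst ν ξ) ∧
    ∃ ρ : K × EuclideanSpace ℝ (Fin k) → ℝ≥0∞, Measurable ρ ∧
      (∀ p, ρ p ≤ ENNReal.ofReal C) ∧
      ν = ((Measure.map Prod.fst ν).prod (volume.restrict D)).withDensity ρ := by
  classical
  haveI : ∀ n, IsFiniteMeasure (νn n) := hfin
  set C' : ℝ≥0∞ := ENNReal.ofReal C with hC'def
  have hC'top : C' ≠ ∞ := ENNReal.ofReal_ne_top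
  set m0 : Measure (EuclideanSpace ℝ (Fin k)) := volume.restrict D with hm0
  haveI : IsFiniteMeasure m0 := by
    constructor
    rw [hm0, Measure.restrict_apply_univ, hD]
    exact measure_closedBall_lt_top
  set νh : Measure K := Measure.map Prod.fst ν with hνh
  haveI : IsFiniteMeasure νh := by
    constructor
    rw [hνh, Measure.map_apply measurable_fst MeasurableSet.univ]
    exact measure_lt_top ν _
  haveI : ∀ n, IsFiniteMeasure (Measure.map Prod.fst (νn n)) := fun n => by
    constructor
    rw [Measure.map_apply measurable_fst MeasurableSet.univ]
    exact measure_lt_top (νn n) _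
  -- portmanteau facts
  have h_open : ∀ G : Set (K × EuclideanSpace ℝ (Fin k)), IsOpen G →
      ν G ≤ atTop.liminf fun n => νn n G := fun G hG => aux_liminf_open ν νn hweak hG
  have hfst_open : ∀ G : Set K, IsOpen G →
      νh G ≤ atTop.liminf fun n => Measure.map Prod.fst (νn n) G :=
    fun G hG => aux_liminf_open _ _ hweakfst hG
  have hfst_closed : ∀ F : Set K, IsClosed F →
      (atTop.limsup fun n => Measure.map Prod.fst (νn n) F) ≤ νh F :=
    fun F hF => aux_limsup_closed _ _ hweakfst hF
  have h_tendsto : ∀ ξ : Set K, νh (frontier ξ) = 0 →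
      Tendsto (fun n => Measure.map Prod.fst (νn n) ξ) atTop (𝓝 (νh ξ)) := by
    intro ξ h0
    exact tendsto_measure_of_le_liminf_measure_of_limsup_measure_le interior_subset
      subset_closure h0 (hfst_open _ isOpen_interior) (hfst_closed _ isClosed_closure)
  -- Step B : rectangles with null-frontier base
  have keyB : ∀ ξ : Set K, IsOpen ξ → νh (frontier ξ) = 0 →
      ∀ η : Set (EuclideanSpace ℝ (Fin k)), IsOpen η →
        ν (ξ ×ˢ η) ≤ C' * m0 η * νh ξ := by
    intro ξ hξ h0 η hη
    have hlim : Tendsto (fun n => C' * m0 η * Measure.map Prod.fst (νn n) ξ) atTop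
        (𝓝 (C' * m0 η * νh ξ)) :=
      ENNReal.Tendsto.const_mul (h_tendsto ξ h0)
        (Or.inr (ENNReal.mul_ne_top hC'top (measure_ne_top m0 η)))
    calc ν (ξ ×ˢ η) ≤ atTop.liminf fun n => νn n (ξ ×ˢ η) := h_open _ (hξ.prod hη)
      _ ≤ atTop.liminf fun n => C' * m0 η * Measure.map Prod.fst (νn n) ξ :=
          liminf_le_liminf (Filter.Eventually.of_forall fun n => h n ξ hξ η hη)
      _ = C' * m0 η * νh ξ := hlim.liminf_eq
  -- Step C : all open rectangles
  have keyC : ∀ ξ : Set K, IsOpen ξ → ∀ η : Set (EuclideanSpace ℝ (Fin k)), IsOpen η →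
      ν (ξ ×ˢ η) ≤ C' * m0 η * νh ξ := by
    intro ξ hξ η hη
    have hex : ∀ j : ℕ, ∃ r ∈ Set.Ioo (1 / (j + 2 : ℝ)) (1 / (j + 1 : ℝ)),
        νh (frontier (Metric.cthickening r ξᶜ)) = 0 := fun j =>
      aux_null_frontier_cthickening νh ξᶜ (by positivity)
        (one_div_lt_one_div_of_lt (by positivity) (by linarith))
    choose r hrIoo hrnull using hex
    have hrpos : ∀ j, 0 < r j := fun j => lt_trans (by positivity) (hrIoo j).1
    have hranti : Antitone r := by
      have : StrictAnti r := strictAnti_nat_of_succ_lt fun j => by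
        have h1 := (hrIoo (j + 1)).2
        have h2 := (hrIoo j).1
        push_cast at h1 h2
        have h3 : ((j : ℝ) + 1 + 1) = ((j : ℝ) + 2) := by ring
        rw [h3] at h1
        linarith
      exact this.antitone
    set ξs : ℕ → Set K := fun j => (Metric.cthickening (r j) ξᶜ)ᶜ with hξs
    have hξsopen : ∀ j, IsOpen (ξs j) := fun j =>
      (Metric.isClosed_cthickening).isOpen_compl
    have hξsnull : ∀ j, νh (frontier (ξs j)) = 0 := fun j => by
      rw [hξs]
      simp only [frontier_compl]
      exact hrnull j
    have hξssub : ∀ j, ξs j ⊆ ξ := by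
      intro j x hx
      by_contra hxξ
      exact hx (Metric.self_subset_cthickening _ hxξ)
    have hmono : Monotone fun j => ξs j ×ˢ η := by
      intro i j hij
      refine Set.prod_mono ?_ subset_rfl
      exact Set.compl_subset_compl.mpr (Metric.cthickening_mono (hranti hij) _)
    have hiU : ⋃ j, ξs j ×ˢ η = ξ ×ˢ η := by
      rw [← Set.iUnion_prod_const]
      congr 1
      refine Set.Subset.antisymm (Set.iUnion_subset hξssub) ?_
      intro x hx
      have hpos : 0 < EMetric.infEdist x ξᶜ := by
        rw [EMetric.infEdist, EMetric.infEdist_pos_iff_notMem_closure, hξ.isClosed_compl.closure_eq]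
        exact fun hmem => hmem hx
      have hr0 : Tendsto r atTop (𝓝 0) := by
        have hub : Tendsto (fun j : ℕ => 1 / (j + 1 : ℝ)) atTop (𝓝 0) :=
          tendsto_one_div_add_atTop_nhds_zero_nat
        exact tendsto_of_tendsto_of_tendsto_of_le_of_le tendsto_const_nhds hub
          (fun j => (hrpos j).le) (fun j => (hrIoo j).2.le)
      have hr0' : Tendsto (fun j => ENNReal.ofReal (r j)) atTop (𝓝 0) := by
        rw [← ENNReal.ofReal_zero]
        exact ENNReal.tendsto_ofReal hr0
      obtain ⟨j, hj⟩ := (hr0'.eventually_lt_const hpos).exists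
      refine Set.mem_iUnion.mpr ⟨j, ?_⟩
      intro hmem
      rw [Metric.mem_cthickening_iff] at hmem
      exact absurd hmem (not_le.mpr hj)
    have hlim := tendsto_measure_iUnion_atTop (μ := ν) hmono
    rw [hiU] at hlim
    refine le_of_tendsto hlim (Filter.Eventually.of_forall fun j => ?_)
    calc ν (ξs j ×ˢ η) ≤ C' * m0 η * νh (ξs j) := keyB _ (hξsopen j) (hξsnull j) η hη
      _ ≤ C' * m0 η * νh ξ := by
          gcongr
          exact hξssub j
  -- Step D : measurable rectangles
  have keyD1 : ∀ A : Set K, MeasurableSet A →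
      ∀ η : Set (EuclideanSpace ℝ (Fin k)), IsOpen η →
        ν (A ×ˢ η) ≤ C' * m0 η * νh A := by
    intro A hA η hη
    rcases eq_or_ne (C' * m0 η) 0 with hc | hc
    · calc ν (A ×ˢ η) ≤ ν (Set.univ ×ˢ η) :=
            measure_mono (Set.prod_mono (Set.subset_univ A) subset_rfl)
        _ ≤ C' * m0 η * νh Set.univ := keyC _ isOpen_univ η hη
        _ = 0 := by rw [hc, zero_mul]
        _ ≤ C' * m0 η * νh A := zero_le
    · set c := C' * m0 η with hcdef
      have hctop : c ≠ ∞ := ENNReal.mul_ne_top hC'top (measure_ne_top m0 η)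
      haveI : (c • νh).OuterRegular := MeasureTheory.Measure.OuterRegular.smul νh hctop
      apply ENNReal.le_of_forall_pos_le_add
      intro ε hε _
      have hfin' : (c • νh) A ≠ ∞ := by
        rw [Measure.smul_apply, smul_eq_mul]
        exact ENNReal.mul_ne_top hctop (measure_ne_top νh A)
      obtain ⟨U, hAU, hUopen, hU⟩ := Set.exists_isOpen_lt_of_lt A ((c • νh) A + ε)
        (ENNReal.lt_add_right hfin' (ENNReal.coe_ne_zero.mpr hε.ne'))
      calc ν (A ×ˢ η) ≤ ν (U ×ˢ η) := measure_mono (Set.prod_mono hAU subset_rfl)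
        _ ≤ C' * m0 η * νh U := keyC U hUopen η hη
        _ = (c • νh) U := by rw [Measure.smul_apply, smul_eq_mul]
        _ ≤ (c • νh) A + ε := hU.le
        _ = C' * m0 η * νh A + ε := by rw [Measure.smul_apply, smul_eq_mul]
  have keyD : ∀ A : Set K, MeasurableSet A →
      ∀ B : Set (EuclideanSpace ℝ (Fin k)), MeasurableSet B →
        ν (A ×ˢ B) ≤ C' * m0 B * νh A := by
    intro A hA B hB
    rcases eq_or_ne (C' * νh A) 0 with hc | hc
    · have : ν (A ×ˢ B) ≤ ν (A ×ˢ (Set.univ : Set (EuclideanSpace ℝ (Fin k)))) :=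
        measure_mono (Set.prod_mono subset_rfl (Set.subset_univ B))
      calc ν (A ×ˢ B) ≤ C' * m0 Set.univ * νh A := this.trans (keyD1 A hA _ isOpen_univ)
        _ = m0 Set.univ * (C' * νh A) := by ring
        _ = 0 := by rw [hc, mul_zero]
        _ ≤ C' * m0 B * νh A := zero_le
    · set c := C' * νh A with hcdef
      have hctop : c ≠ ∞ := ENNReal.mul_ne_top hC'top (measure_ne_top νh A)
      haveI : (c • m0).OuterRegular := MeasureTheory.Measure.OuterRegular.smul m0 hctop
      apply ENNReal.le_of_forall_pos_le_add
      intro ε hε _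
      have hfin' : (c • m0) B ≠ ∞ := by
        rw [Measure.smul_apply, smul_eq_mul]
        exact ENNReal.mul_ne_top hctop (measure_ne_top m0 B)
      obtain ⟨V, hBV, hVopen, hV⟩ := Set.exists_isOpen_lt_of_lt B ((c • m0) B + ε)
        (ENNReal.lt_add_right hfin' (ENNReal.coe_ne_zero.mpr hε.ne'))
      have e1 : ∀ W, C' * m0 W * νh A = (c • m0) W := by
        intro W
        rw [Measure.smul_apply, smul_eq_mul, hcdef]
        ring
      calc ν (A ×ˢ B) ≤ ν (A ×ˢ V) := measure_mono (Set.prod_mono subset_rfl hBV)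
        _ ≤ C' * m0 V * νh A := keyD1 A hA V hVopen
        _ = (c • m0) V := e1 V
        _ ≤ (c • m0) B + ε := hV.le
        _ = C' * m0 B * νh A + ε := by rw [← e1 B]
  -- Step E : ν ≤ C' • (νh.prod m0)
  set μp : Measure (K × EuclideanSpace ℝ (Fin k)) := νh.prod m0 with hμp
  have hrect : ∀ A : Set K, ∀ B : Set (EuclideanSpace ℝ (Fin k)),
      MeasurableSet A → MeasurableSet B → ν (A ×ˢ B) ≤ (C' • μp) (A ×ˢ B) := by
    intro A B hA hB
    rw [Measure.smul_apply, smul_eq_mul, hμp, Measure.prod_prod]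
    calc ν (A ×ˢ B) ≤ C' * m0 B * νh A := keyD A hA B hB
      _ = C' * (νh A * m0 B) := by ring
  have hopenle : ∀ U : Set (K × EuclideanSpace ℝ (Fin k)), IsOpen U →
      ν U ≤ (C' • μp) U := fun U hU => aux_open_rect ν (C' • μp) hrect hU
  haveI : (C' • μp).OuterRegular := MeasureTheory.Measure.OuterRegular.smul μp hC'top
  have hle : ν ≤ C' • μp := by
    rw [Measure.le_iff]
    intro s hs
    apply ENNReal.le_of_forall_pos_le_add
    intro ε hε _
    have hfinp : (C' • μp) s ≠ ∞ := by
      rw [Measure.smul_apply, smul_eq_mul]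
      exact ENNReal.mul_ne_top hC'top (measure_ne_top μp s)
    obtain ⟨U, hsU, hUopen, hU⟩ := Set.exists_isOpen_lt_of_lt s ((C' • μp) s + ε)
      (ENNReal.lt_add_right hfinp (ENNReal.coe_ne_zero.mpr hε.ne'))
    exact (measure_mono hsU).trans ((hopenle U hUopen).trans hU.le)
  -- Step F : conclusion
  have hle' : ∀ s, ν s ≤ C' * μp s := by
    intro s
    have := Measure.le_iff'.mp hle s
    rwa [Measure.smul_apply, smul_eq_mul] at this
  have hac : ν ≪ μp := by
    refine Measure.AbsolutelyContinuous.mk fun s hs h0 => ?_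
    have := hle' s
    rw [h0, mul_zero] at this
    exact le_antisymm this zero_le
  haveI : IsFiniteMeasure μp := by rw [hμp]; infer_instance
  haveI : ν.HaveLebesgueDecomposition μp := Measure.haveLebesgueDecomposition_of_sigmaFinite ν μp
  have hdens := Measure.withDensity_rnDeriv_eq ν μp hac
  have hbd : ν.rnDeriv μp ≤ᵐ[μp] fun _ => C' := by
    refine ae_le_of_forall_setLIntegral_le_of_sigmaFinite
      (Measure.measurable_rnDeriv ν μp) fun s hs _ => ?_
    rw [Measure.setLIntegral_rnDeriv' hac hs]
    calc ν s ≤ C' * μp s := hle' s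
      _ = ∫⁻ _ in s, C' ∂μp := by rw [setLIntegral_const, mul_comm]
  refine ⟨fun ξ hξ h0 η hη => keyB ξ hξ h0 η hη, ?_⟩
  refine ⟨fun p => min (ν.rnDeriv μp p) C',
    (Measure.measurable_rnDeriv ν μp).min measurable_const,
    fun p => min_le_right _ _, ?_⟩
  have hmin : (fun p => min (ν.rnDeriv μp p) C') =ᵐ[μp] ν.rnDeriv μp :=
    hbd.mono fun p hp => min_eq_left hp
  rw [withDensity_congr_ae hmin, hdens]
end

section
/- With the skew product G as above, if μ_n is a stationary measure for ν_n, ν_n → δ_{ω_f} (the Dirac mass at the point ω_f with f_{ω_f} = f), and μ_n → μ weakly, then μ is f-invariant and μ_n^G → δ_{ω_f}^ℤ × μ weakly; in particular μ^G = δ_{ω_f}^ℤ × μ. -/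
open MeasureTheory Filter
open scoped BoundedContinuousFunction
open Set

/-- The two-sided skew product `G(ω̲,x) = (σω̲, f_{ω₀}(x))` over the shift. -/
def skewG {Ω M : Type*} (F : Ω → M → M) : (ℤ → Ω) × M → (ℤ → Ω) × M :=
  fun p => (fun i => p.1 (i + 1), F (p.1 0) p.2)

/-- The projection `ℙ : Ω^ℤ × M → Ω^ℕ × M` forgetting negative coordinates. -/
def projP {Ω M : Type*} : (ℤ → Ω) × M → (ℕ → Ω) × M :=
  fun p => (fun i => p.1 (i : ℤ), p.2)

/-- `P = ν^ℕ × μ`, expressed via all its finite-dimensional marginals. -/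
def IsPowProd {Ω M : Type*} [MeasurableSpace Ω] [MeasurableSpace M]
    (ν : Measure Ω) (μ : Measure M) (P : Measure ((ℕ → Ω) × M)) : Prop :=
  ∀ n : ℕ, Measure.map (fun q : (ℕ → Ω) × M => ((fun i : Fin n => q.1 i), q.2)) P
    = (Measure.pi fun _ : Fin n => ν).prod μ

lemma map_eval_pi' {n : ℕ} {α : Type*} [MeasurableSpace α] (μ : Measure α)
    [IsProbabilityMeasure μ] (i : Fin n) :
    Measure.map (Function.eval i) (Measure.pi fun _ : Fin n => μ) = μ := by
  ext s hs
  rw [Measure.map_apply (measurable_pi_apply i) hs, Set.eval_preimage, Measure.pi_pi]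
  have : ∀ j : Fin n, (fun _ => μ) j (Function.update (fun _ => (univ : Set α)) i s j)
      = if j = i then μ s else 1 := by
    intro j
    by_cases h : j = i
    · subst h; simp
    · simp [Function.update_of_ne h, measure_univ, h]
  simp_rw [this]
  simp

section
variable {Ω M : Type*} [MetricSpace Ω] [CompactSpace Ω] [MeasurableSpace Ω] [BorelSpace Ω]
  [MetricSpace M] [CompactSpace M] [MeasurableSpace M] [BorelSpace M]

lemma measurable_skewG {F : Ω → M → M} (hF : Continuous fun p : Ω × M => F p.1 p.2) :
    Measurable (skewG F) := by
  apply Measurable.prodMk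
  · exact measurable_pi_lambda _ fun i => (measurable_pi_apply (i + 1)).comp measurable_fst
  · exact hF.measurable.comp
      (Measurable.prodMk ((measurable_pi_apply 0).comp measurable_fst) measurable_snd)

omit [MetricSpace Ω] [CompactSpace Ω] [BorelSpace Ω] [MetricSpace M] [CompactSpace M]
  [BorelSpace M] in
lemma measurable_projP : Measurable (projP : (ℤ → Ω) × M → (ℕ → Ω) × M) :=
  Measurable.prodMk (measurable_pi_lambda _ fun _ => (measurable_pi_apply _).comp measurable_fst)
    measurable_snd

lemma marginals {F : Ω → M → M} (hF : Continuous fun p : Ω × M => F p.1 p.2)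
    (ν : Measure Ω) [IsProbabilityMeasure ν] (μ' : Measure M) [IsProbabilityMeasure μ']
    (η : Measure ((ℤ → Ω) × M))
    (hG : Measure.map (skewG F) η = η) (hp : IsPowProd ν μ' (Measure.map projP η)) :
    (∀ i : ℤ, Measure.map (fun p : (ℤ → Ω) × M => p.1 i) η = ν) ∧
      Measure.map (fun p : (ℤ → Ω) × M => p.2) η = μ' := by
  have hfs : ∀ n : ℕ, Measurable fun q : (ℕ → Ω) × M => ((fun i : Fin n => q.1 i), q.2) :=
    fun n => Measurable.prodMk
      (measurable_pi_lambda _ fun _ => (measurable_pi_apply _).comp measurable_fst)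
      measurable_snd
  -- nonnegative coordinates
  have hnat : ∀ j : ℕ, Measure.map (fun p : (ℤ → Ω) × M => p.1 (j : ℤ)) η = ν := by
    intro j
    have h1 : Measure.map (fun p : (ℤ → Ω) × M => p.1 (j : ℤ)) η
        = Measure.map (fun q : (ℕ → Ω) × M => q.1 j) (Measure.map projP η) :=
      (Measure.map_map ((measurable_pi_apply j).comp measurable_fst) measurable_projP).symm
    have h2 : Measure.map (fun q : (ℕ → Ω) × M => q.1 j) (Measure.map projP η)
        = Measure.map (fun v : (Fin (j+1) → Ω) × M => v.1 ⟨j, Nat.lt_succ_self j⟩)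
            (Measure.map (fun q : (ℕ → Ω) × M => ((fun i : Fin (j+1) => q.1 i), q.2))
              (Measure.map projP η)) :=
      (Measure.map_map (show Measurable fun v : (Fin (j+1) → Ω) × M =>
          v.1 ⟨j, Nat.lt_succ_self j⟩ from (measurable_pi_apply _).comp measurable_fst)
        (hfs (j+1))).symm
    have h3 : Measure.map (fun v : (Fin (j+1) → Ω) × M => v.1 ⟨j, Nat.lt_succ_self j⟩)
        ((Measure.pi fun _ : Fin (j+1) => ν).prod μ')
        = Measure.map (Function.eval (⟨j, Nat.lt_succ_self j⟩ : Fin (j+1)))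
            (Measure.map Prod.fst ((Measure.pi fun _ : Fin (j+1) => ν).prod μ')) :=
      (Measure.map_map (measurable_pi_apply _) measurable_fst).symm
    rw [h1, h2, hp (j+1), h3, Measure.map_fst_prod, measure_univ, one_smul, map_eval_pi']
  -- shifting: coordinate i equals coordinate i+1
  have hshift : ∀ i : ℤ, Measure.map (fun p : (ℤ → Ω) × M => p.1 i) η
      = Measure.map (fun p : (ℤ → Ω) × M => p.1 (i + 1)) η := by
    intro i
    conv_lhs => rw [← hG]
    exact Measure.map_map ((measurable_pi_apply i).comp measurable_fst) (measurable_skewG hF)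
  have hadd : ∀ (k : ℕ) (i : ℤ), Measure.map (fun p : (ℤ → Ω) × M => p.1 i) η
      = Measure.map (fun p : (ℤ → Ω) × M => p.1 (i + k)) η := by
    intro k
    induction k with
    | zero => intro i; simp
    | succ m ih =>
        intro i
        have e : i + ((m + 1 : ℕ) : ℤ) = (i + 1) + (m : ℕ) := by push_cast; ring
        rw [e, hshift i, ih (i + 1)]
  constructor
  · intro i
    have h0 : i + ((-i).toNat : ℤ) = (((i + (-i).toNat).toNat : ℕ) : ℤ) := by omega
    rw [hadd (-i).toNat i, h0, hnat]
  · have h1 : Measure.map (fun p : (ℤ → Ω) × M => p.2) η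
        = Measure.map (fun q : (ℕ → Ω) × M => q.2) (Measure.map projP η) :=
      (Measure.map_map measurable_snd measurable_projP).symm
    have h2 : Measure.map (fun q : (ℕ → Ω) × M => q.2) (Measure.map projP η)
        = Measure.map (fun v : (Fin 0 → Ω) × M => v.2)
            (Measure.map (fun q : (ℕ → Ω) × M => ((fun i : Fin 0 => q.1 i), q.2))
              (Measure.map projP η)) :=
      (Measure.map_map measurable_snd (hfs 0)).symm
    rw [h1, h2, hp 0, Measure.map_snd_prod, measure_univ, one_smul]
end

section AB
variable {Ω M : Type*} [MetricSpace Ω] [CompactSpace Ω] [MeasurableSpace Ω] [BorelSpace Ω]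
  [MetricSpace M] [CompactSpace M] [MeasurableSpace M] [BorelSpace M]

omit [MetricSpace M] [CompactSpace M] [MeasurableSpace M] [BorelSpace M] in
lemma lemA (ωf : Ω) (νn : ℕ → Measure Ω) (hνn : ∀ n, IsProbabilityMeasure (νn n))
    (hνconv : ∀ ψ : Ω →ᵇ ℝ,
      Filter.Tendsto (fun n => ∫ ω, ψ ω ∂(νn n)) Filter.atTop (nhds (ψ ωf)))
    (u : Set Ω) (hu : IsOpen u) (hωf : ωf ∈ u) :
    Filter.Tendsto (fun n => ((νn n) uᶜ).toReal) Filter.atTop (nhds 0) := by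
  obtain ⟨δ, hδ, hball⟩ := Metric.isOpen_iff.mp hu ωf hωf
  set ψ : Ω →ᵇ ℝ := BoundedContinuousFunction.mkOfCompact
    ⟨fun ω => min (dist ω ωf / δ) 1, by fun_prop⟩ with hψ
  have hψ0 : ψ ωf = 0 := by simp [hψ, hδ.le]
  have hle : ∀ n, ((νn n) uᶜ).toReal ≤ ∫ ω, ψ ω ∂(νn n) := by
    intro n
    haveI := hνn n
    rw [← measureReal_def, ← integral_indicator_one (hu.measurableSet.compl)]
    apply integral_mono ((integrable_const (1:ℝ)).indicator hu.measurableSet.compl)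
      (ψ.integrable (νn n))
    intro ω
    by_cases h : ω ∈ uᶜ
    · have hd : δ ≤ dist ω ωf := by
        by_contra hlt
        exact h (hball (by simpa [Metric.mem_ball] using not_le.mp hlt))
      simp only [Set.indicator_of_mem h, Pi.one_apply]
      refine le_min ((one_le_div hδ).mpr hd) le_rfl
    · simp only [Set.indicator_of_notMem h, hψ, BoundedContinuousFunction.mkOfCompact_apply,
        ContinuousMap.coe_mk]
      positivity
  have h0 : ∀ n, (0:ℝ) ≤ ((νn n) uᶜ).toReal := fun n => ENNReal.toReal_nonneg
  have := hνconv ψ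
  rw [hψ0] at this
  exact tendsto_of_tendsto_of_tendsto_of_le_of_le tendsto_const_nhds this h0 hle

lemma lemB (ωf : Ω) (νn : ℕ → Measure Ω) (hνn : ∀ n, IsProbabilityMeasure (νn n))
    (hνconv : ∀ ψ : Ω →ᵇ ℝ,
      Filter.Tendsto (fun n => ∫ ω, ψ ω ∂(νn n)) Filter.atTop (nhds (ψ ωf)))
    (ηn : ℕ → Measure ((ℤ → Ω) × M)) (hηn : ∀ n, IsProbabilityMeasure (ηn n))
    (hmarg : ∀ n (i : ℤ), Measure.map (fun p : (ℤ → Ω) × M => p.1 i) (ηn n) = νn n)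
    (U : Set ((ℤ → Ω) × M)) (hU : IsOpen U)
    (hXf : {p : (ℤ → Ω) × M | p.1 = fun _ => ωf} ⊆ U) :
    Filter.Tendsto (fun n => ((ηn n) Uᶜ).toReal) Filter.atTop (nhds 0) := by
  set Xf : ℤ → Ω := fun _ => ωf with hXfdef
  have hUc : IsCompact Uᶜ := hU.isClosed_compl.isCompact
  have hK : IsCompact (Prod.fst '' Uᶜ) := hUc.image continuous_fst
  have hXfK : Xf ∉ Prod.fst '' Uᶜ := by
    rintro ⟨p, hp, hfst⟩
    exact hp (hXf hfst)
  have hKo : IsOpen (Prod.fst '' Uᶜ)ᶜ := hK.isClosed.isOpen_compl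
  obtain ⟨I, u, hIu, hpi⟩ := isOpen_pi_iff.mp hKo Xf hXfK
  -- inclusion
  have hincl : Uᶜ ⊆ ⋃ i ∈ I, ((fun p : (ℤ → Ω) × M => p.1 i) ⁻¹' (u i)ᶜ) := by
    intro p hp
    by_contra hc
    simp only [Set.mem_iUnion, Set.mem_preimage, Set.mem_compl_iff, not_exists, not_not] at hc
    have : p.1 ∈ (I : Set ℤ).pi u := fun i hi => hc i hi
    exact (hpi this) ⟨p, hp, rfl⟩
  have hbound : ∀ n, ((ηn n) Uᶜ).toReal ≤ ∑ i ∈ I, ((νn n) (u i)ᶜ).toReal := by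
    intro n
    haveI := hνn n
    have h1 : (ηn n) Uᶜ ≤ ∑ i ∈ I, (ηn n) ((fun p : (ℤ → Ω) × M => p.1 i) ⁻¹' (u i)ᶜ) :=
      le_trans (measure_mono hincl) (measure_biUnion_finset_le I _)
    have h2 : ∀ i ∈ I, (ηn n) ((fun p : (ℤ → Ω) × M => p.1 i) ⁻¹' (u i)ᶜ) = (νn n) (u i)ᶜ := by
      intro i hi
      rw [← hmarg n i, Measure.map_apply (show Measurable fun p : (ℤ → Ω) × M => p.1 i from
        (measurable_pi_apply i).comp measurable_fst) (hIu i hi).1.measurableSet.compl]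
    rw [Finset.sum_congr rfl h2] at h1
    calc ((ηn n) Uᶜ).toReal ≤ (∑ i ∈ I, (νn n) (u i)ᶜ).toReal :=
          ENNReal.toReal_mono (ENNReal.sum_lt_top.mpr fun i _ => measure_lt_top _ _).ne h1
      _ = ∑ i ∈ I, ((νn n) (u i)ᶜ).toReal := ENNReal.toReal_sum fun i _ => measure_ne_top _ _
  have hS : Filter.Tendsto (fun n => ∑ i ∈ I, ((νn n) (u i)ᶜ).toReal) Filter.atTop (nhds 0) := by
    have h := tendsto_finset_sum I (fun i hi =>
      lemA ωf νn hνn hνconv (u i) (hIu i hi).1 (hIu i hi).2)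
    simpa using h
  exact tendsto_of_tendsto_of_tendsto_of_le_of_le tendsto_const_nhds hS
    (fun n => ENNReal.toReal_nonneg) hbound
end AB

section Core
variable {Ω M : Type*} [MetricSpace Ω] [CompactSpace Ω] [MeasurableSpace Ω] [BorelSpace Ω]
  [MetricSpace M] [CompactSpace M] [MeasurableSpace M] [BorelSpace M]

lemma weak_conv (ωf : Ω) (νn : ℕ → Measure Ω) (hνn : ∀ n, IsProbabilityMeasure (νn n))
    (hνconv : ∀ ψ : Ω →ᵇ ℝ,
      Filter.Tendsto (fun n => ∫ ω, ψ ω ∂(νn n)) Filter.atTop (nhds (ψ ωf)))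
    (μn : ℕ → Measure M) (hμn : ∀ n, IsProbabilityMeasure (μn n))
    (μ : Measure M) [IsProbabilityMeasure μ]
    (hμconv : ∀ φ : M →ᵇ ℝ,
      Filter.Tendsto (fun n => ∫ x, φ x ∂(μn n)) Filter.atTop (nhds (∫ x, φ x ∂μ)))
    (ηn : ℕ → Measure ((ℤ → Ω) × M)) (hηn : ∀ n, IsProbabilityMeasure (ηn n))
    (hmarg : ∀ n (i : ℤ), Measure.map (fun p : (ℤ → Ω) × M => p.1 i) (ηn n) = νn n)
    (hsnd : ∀ n, Measure.map (fun p : (ℤ → Ω) × M => p.2) (ηn n) = μn n)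
    (φ : ((ℤ → Ω) × M) →ᵇ ℝ) :
    Filter.Tendsto (fun n => ∫ p, φ p ∂(ηn n)) Filter.atTop
      (nhds (∫ p, φ p ∂((Measure.dirac (fun _ : ℤ => ωf)).prod μ))) := by
  set Xf : ℤ → Ω := fun _ => ωf with hXfdef
  have hPint : ∫ p, φ p ∂((Measure.dirac Xf).prod μ) = ∫ x, φ (Xf, x) ∂μ := by
    rw [Measure.dirac_prod, integral_map measurable_prodMk_left.aemeasurable
      φ.continuous.aestronglyMeasurable]
  set cm : C(M, (ℤ → Ω) × M) := ⟨fun x => (Xf, x), by fun_prop⟩ with hcm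
  set φc : M →ᵇ ℝ := φ.compContinuous cm with hφc
  set cSnd : C((ℤ → Ω) × M, (ℤ → Ω) × M) := ⟨fun p => (Xf, p.2), by fun_prop⟩ with hcSnd
  set Φ : ((ℤ → Ω) × M) →ᵇ ℝ := φ - φ.compContinuous cSnd with hΦ
  have hΦapp : ∀ p : (ℤ → Ω) × M, Φ p = φ p - φ (Xf, p.2) := fun p => rfl
  have hBn : ∀ n, ∫ p, φ (Xf, p.2) ∂(ηn n) = ∫ x, φc x ∂(μn n) := by
    intro n
    rw [← hsnd n]
    exact (integral_map measurable_snd.aemeasurable φc.continuous.aestronglyMeasurable).symm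
  set D : ℕ → ℝ := fun n => ∫ p, Φ p ∂(ηn n) with hD
  have hsplit : ∀ n, ∫ p, φ p ∂(ηn n) = D n + ∫ p, φ (Xf, p.2) ∂(ηn n) := by
    intro n
    haveI := hηn n
    have h := integral_sub (φ.integrable (ηn n)) ((φ.compContinuous cSnd).integrable (ηn n))
    have h2 : D n = ∫ p, φ p ∂(ηn n) - ∫ p, (φ.compContinuous cSnd) p ∂(ηn n) := h
    rw [h2]
    have : ∫ p, (φ.compContinuous cSnd) p ∂(ηn n) = ∫ p, φ (Xf, p.2) ∂(ηn n) := rfl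
    rw [this]; ring
  have hDzero : Filter.Tendsto D Filter.atTop (nhds 0) := by
    rw [NormedAddCommGroup.tendsto_nhds_zero]
    intro ε hε
    set U : Set ((ℤ → Ω) × M) := {p | ‖Φ p‖ < ε/2} with hU
    have hUopen : IsOpen U := isOpen_lt Φ.continuous.norm continuous_const
    have hUXf : {p : (ℤ → Ω) × M | p.1 = Xf} ⊆ U := by
      intro p hp
      have : (Xf, p.2) = p := by rw [← hp]
      simp only [hU, Set.mem_setOf_eq, hΦapp, this, sub_self, norm_zero]
      exact half_pos hε
    have htail := lemB ωf νn hνn hνconv ηn hηn hmarg U hUopen hUXf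
    have hev : ∀ᶠ n in Filter.atTop,
        (2 * ‖φ‖ + 1) * ((ηn n) Uᶜ).toReal < ε/2 := by
      have := htail.const_mul (2 * ‖φ‖ + 1)
      rw [mul_zero] at this
      exact this.eventually_lt_const (half_pos hε)
    filter_upwards [hev] with n hn
    haveI := hηn n
    have hb1 : ‖D n‖ ≤ ∫ p, ‖Φ p‖ ∂(ηn n) := norm_integral_le_integral_norm _
    have hpoint : ∀ p : (ℤ → Ω) × M,
        ‖Φ p‖ ≤ ε/2 + (2 * ‖φ‖ + 1) * (Uᶜ).indicator (1 : ((ℤ → Ω) × M) → ℝ) p := by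
      intro p
      by_cases hpU : p ∈ U
      · have h1 : (Uᶜ).indicator (1 : ((ℤ → Ω) × M) → ℝ) p = 0 := Set.indicator_of_notMem (by simpa) _
        rw [h1, mul_zero, add_zero]
        exact le_of_lt hpU
      · have h1 : (Uᶜ).indicator (1 : ((ℤ → Ω) × M) → ℝ) p = 1 := Set.indicator_of_mem (by simpa) _
        rw [h1, mul_one]
        have : ‖Φ p‖ ≤ 2 * ‖φ‖ := by
          rw [hΦapp]
          calc ‖φ p - φ (Xf, p.2)‖ ≤ ‖φ p‖ + ‖φ (Xf, p.2)‖ := norm_sub_le _ _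
            _ ≤ ‖φ‖ + ‖φ‖ := add_le_add (φ.norm_coe_le_norm p) (φ.norm_coe_le_norm _)
            _ = 2 * ‖φ‖ := by ring
        have hε2 : (0:ℝ) ≤ ε/2 := (half_pos hε).le
        linarith
    have hIndInt : Integrable ((Uᶜ).indicator (1 : ((ℤ → Ω) × M) → ℝ)) (ηn n) :=
      (integrable_const (1:ℝ)).indicator hUopen.measurableSet.compl
    have hb2 : ∫ p, ‖Φ p‖ ∂(ηn n)
        ≤ ∫ p, (ε/2 + (2 * ‖φ‖ + 1) * (Uᶜ).indicator (1 : ((ℤ → Ω) × M) → ℝ) p) ∂(ηn n) := by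
      exact integral_mono (Φ.integrable (ηn n)).norm
        ((integrable_const _).add (hIndInt.const_mul _)) hpoint
    have hb3 : ∫ p, (ε/2 + (2 * ‖φ‖ + 1) * (Uᶜ).indicator (1 : ((ℤ → Ω) × M) → ℝ) p) ∂(ηn n)
        = ε/2 + (2 * ‖φ‖ + 1) * ((ηn n) Uᶜ).toReal := by
      rw [integral_add (integrable_const _) (hIndInt.const_mul _), integral_const,
        integral_const_mul, integral_indicator_one hUopen.measurableSet.compl, measureReal_def (ηn n) Uᶜ]
      simp
    calc ‖D n‖ ≤ ∫ p, ‖Φ p‖ ∂(ηn n) := hb1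
      _ ≤ ε/2 + (2 * ‖φ‖ + 1) * ((ηn n) Uᶜ).toReal := le_of_le_of_eq hb2 hb3
      _ < ε/2 + ε/2 := by linarith
      _ = ε := add_halves ε
  have hBconv : Filter.Tendsto (fun n => ∫ x, φc x ∂(μn n)) Filter.atTop
      (nhds (∫ x, φc x ∂μ)) := hμconv φc
  have hfinal := hDzero.add hBconv
  rw [zero_add] at hfinal
  have heq : ∀ n, ∫ p, φ p ∂(ηn n) = D n + ∫ x, φc x ∂(μn n) := by
    intro n; rw [hsplit n, hBn n]
  have heq2 : ∫ p, φ p ∂((Measure.dirac Xf).prod μ) = ∫ x, φc x ∂μ := hPint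
  rw [show (fun n => ∫ p, φ p ∂(ηn n)) = fun n => D n + ∫ x, φc x ∂(μn n) from funext heq,
    heq2]
  exact hfinal
end Core


/-- If `μ_n` is stationary for `ν_n`, `ν_n → δ_{ω_f}` and `μ_n → μ` weakly, then `μ`
is `f`-invariant (`f = F ω_f`) and the lifts `μ_n^G` converge weakly to
`δ_{ω_f}^ℤ × μ`; in particular `μ^G = δ_{ω_f}^ℤ × μ`. -/
theorem zero_noise_skew_limit
    {Ω M : Type*} [MetricSpace Ω] [CompactSpace Ω] [MeasurableSpace Ω] [BorelSpace Ω]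
    [MetricSpace M] [CompactSpace M] [MeasurableSpace M] [BorelSpace M]
    (F : Ω → M → M) (hF : Continuous fun p : Ω × M => F p.1 p.2)
    (ωf : Ω)
    (νn : ℕ → Measure Ω) (hνn : ∀ n, IsProbabilityMeasure (νn n))
    (μn : ℕ → Measure M) (hμn : ∀ n, IsProbabilityMeasure (μn n))
    (μ : Measure M) [IsProbabilityMeasure μ]
    (hstat : ∀ n, ∀ A : Set M, MeasurableSet A →
      μn n A = ∫⁻ ω, μn n ((F ω) ⁻¹' A) ∂(νn n))
    (ηn : ℕ → Measure ((ℤ → Ω) × M)) (hηn : ∀ n, IsProbabilityMeasure (ηn n))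
    (hGinv : ∀ n, Measure.map (skewG F) (ηn n) = ηn n)
    (hproj : ∀ n, IsPowProd (νn n) (μn n) (Measure.map projP (ηn n)))
    (hνconv : ∀ ψ : Ω →ᵇ ℝ,
      Tendsto (fun n => ∫ ω, ψ ω ∂(νn n)) atTop (nhds (ψ ωf)))
    (hμconv : ∀ φ : M →ᵇ ℝ,
      Tendsto (fun n => ∫ x, φ x ∂(μn n)) atTop (nhds (∫ x, φ x ∂μ))) :
    Measure.map (F ωf) μ = μ ∧
    (∀ φ : ((ℤ → Ω) × M) →ᵇ ℝ,
      Tendsto (fun n => ∫ p, φ p ∂(ηn n)) atTop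
        (nhds (∫ p, φ p ∂((Measure.dirac (fun _ : ℤ => ωf)).prod μ)))) ∧
    ∀ η : Measure ((ℤ → Ω) × M), IsProbabilityMeasure η →
      Measure.map (skewG F) η = η →
      IsPowProd (Measure.dirac ωf) μ (Measure.map projP η) →
      η = (Measure.dirac (fun _ : ℤ => ωf)).prod μ := by
  set Xf : ℤ → Ω := fun _ : ℤ => ωf with hXfdef
  have hm : ∀ n, (∀ i : ℤ, Measure.map (fun p : (ℤ → Ω) × M => p.1 i) (ηn n) = νn n) ∧
      Measure.map (fun p : (ℤ → Ω) × M => p.2) (ηn n) = μn n := by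
    intro n
    haveI := hνn n; haveI := hμn n
    exact marginals hF (νn n) (μn n) (ηn n) (hGinv n) (hproj n)
  have part2 : ∀ φ : ((ℤ → Ω) × M) →ᵇ ℝ,
      Tendsto (fun n => ∫ p, φ p ∂(ηn n)) atTop
        (nhds (∫ p, φ p ∂((Measure.dirac Xf).prod μ))) := fun φ =>
    weak_conv ωf νn hνn hνconv μn hμn μ hμconv ηn hηn (fun n i => (hm n).1 i)
      (fun n => (hm n).2) φ
  have hFωf : Continuous (F ωf) :=
    hF.comp (continuous_const.prodMk continuous_id)
  -- Part 1: invariance of μ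
  have hinv : ∀ ψ : M →ᵇ ℝ, ∫ x, ψ (F ωf x) ∂μ = ∫ x, ψ x ∂μ := by
    intro ψ
    set φ1 : ((ℤ → Ω) × M) →ᵇ ℝ := ψ.compContinuous ⟨fun p => p.2, continuous_snd⟩ with hφ1
    set φ2 : ((ℤ → Ω) × M) →ᵇ ℝ := ψ.compContinuous
      ⟨fun p => F (p.1 0) p.2,
        hF.comp (Continuous.prodMk ((continuous_apply 0).comp continuous_fst)
          continuous_snd)⟩ with hφ2
    have h1 := part2 φ1
    have h2 := part2 φ2
    have heqn : ∀ n, ∫ p, φ2 p ∂(ηn n) = ∫ p, φ1 p ∂(ηn n) := by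
      intro n
      conv_rhs => rw [← hGinv n]
      rw [integral_map (measurable_skewG hF).aemeasurable
        φ1.continuous.aestronglyMeasurable]
      rfl
    rw [show (fun n => ∫ p, φ2 p ∂(ηn n)) = fun n => ∫ p, φ1 p ∂(ηn n) from funext heqn] at h2
    have huniq := tendsto_nhds_unique h2 h1
    have e1 : ∫ p, φ1 p ∂((Measure.dirac Xf).prod μ) = ∫ x, ψ x ∂μ := by
      rw [Measure.dirac_prod, integral_map measurable_prodMk_left.aemeasurable
        φ1.continuous.aestronglyMeasurable]
      rfl
    have e2 : ∫ p, φ2 p ∂((Measure.dirac Xf).prod μ) = ∫ x, ψ (F ωf x) ∂μ := by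
      rw [Measure.dirac_prod, integral_map measurable_prodMk_left.aemeasurable
        φ2.continuous.aestronglyMeasurable]
      rfl
    rw [e1, e2] at huniq
    exact huniq
  have part1 : Measure.map (F ωf) μ = μ := by
    haveI : IsProbabilityMeasure (Measure.map (F ωf) μ) :=
      Measure.isProbabilityMeasure_map hFωf.measurable.aemeasurable
    apply ext_of_forall_lintegral_eq_of_IsFiniteMeasure
    intro f
    set g : M →ᵇ ℝ := BoundedContinuousFunction.mkOfCompact
      ⟨fun x => (f x : ℝ), NNReal.continuous_coe.comp f.continuous⟩ with hg
    have fin1 : ∫⁻ x, f x ∂(Measure.map (F ωf) μ) ≠ ⊤ :=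
      (f.lintegral_lt_top_of_nnreal _).ne
    have fin2 : ∫⁻ x, f x ∂μ ≠ ⊤ := (f.lintegral_lt_top_of_nnreal _).ne
    rw [← ENNReal.toReal_eq_toReal_iff' fin1 fin2,
      BoundedContinuousFunction.toReal_lintegral_coe_eq_integral,
      BoundedContinuousFunction.toReal_lintegral_coe_eq_integral,
      integral_map hFωf.measurable.aemeasurable
        (show Continuous fun x : M => ((f x : ℝ)) from
          NNReal.continuous_coe.comp f.continuous).aestronglyMeasurable]
    exact hinv g
  refine ⟨part1, part2, ?_⟩
  -- Part 3: uniqueness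
  intro η hηprob hGη hpη
  haveI := hηprob
  have hm' := marginals hF (Measure.dirac ωf) μ η hGη hpη
  have hnull : η {p : (ℤ → Ω) × M | p.1 ≠ Xf} = 0 := by
    have hsub : {p : (ℤ → Ω) × M | p.1 ≠ Xf}
        ⊆ ⋃ i : ℤ, {p : (ℤ → Ω) × M | p.1 i ≠ ωf} := by
      intro p hp
      rcases Function.ne_iff.mp hp with ⟨i, hi⟩
      exact Set.mem_iUnion.mpr ⟨i, hi⟩
    refine measure_mono_null hsub (measure_iUnion_null fun i => ?_)
    have hpre : {p : (ℤ → Ω) × M | p.1 i ≠ ωf}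
        = (fun p : (ℤ → Ω) × M => p.1 i) ⁻¹' {ωf}ᶜ := rfl
    rw [hpre, ← Measure.map_apply (show Measurable fun p : (ℤ → Ω) × M => p.1 i from
      (measurable_pi_apply i).comp measurable_fst) (measurableSet_singleton ωf).compl,
      hm'.1 i]
    simp
  have hae : ∀ᵐ p ∂η, p.1 = Xf := by
    rw [ae_iff]
    exact hnull
  ext s hs
  have hT : MeasurableSet (Prod.mk Xf ⁻¹' s) := measurable_prodMk_left hs
  have h1 : η s = η ((fun p : (ℤ → Ω) × M => p.2) ⁻¹' (Prod.mk Xf ⁻¹' s)) := by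
    apply measure_congr
    rw [Filter.eventuallyEq_set]
    filter_upwards [hae] with p hp
    have hpe : (Xf, p.2) = p := by rw [← hp]
    simp [Set.mem_preimage, hpe]
  have h2 : η ((fun p : (ℤ → Ω) × M => p.2) ⁻¹' (Prod.mk Xf ⁻¹' s))
      = μ (Prod.mk Xf ⁻¹' s) := by
    rw [← hm'.2, Measure.map_apply measurable_snd hT]
  rw [h1, h2, Measure.dirac_prod, Measure.map_apply measurable_prodMk_left hs]
end

section
/- (Special case of Pliss with explicit constant) Let p_0 ≥ p_1 > p_2 > 0 and set ρ = (p_1 − p_2)/(p_0 − p_2). For any N ≥ 1 and reals a_1,…,a_N with ∑_{i=1}^N a_i ≥ N p_1 and a_i ≤ p_0 for all i, the number ℓ of indices 1 ≤ j ≤ N such that ∑_{i=n+1}^{j} a_i ≥ (j−n) p_2 for every 0 ≤ n < j satisfies ℓ ≥ ρ N. -/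
open scoped Classical

/-- Pliss lemma with the explicit constant `ρ = (p₁ − p₂)/(p₀ − p₂)`: if
`∑_{i=1}^N aᵢ ≥ N p₁` and `aᵢ ≤ p₀`, then the number of `p₂`-Pliss times `j ∈ [1,N]`
(indices with `∑_{i=n+1}^j aᵢ ≥ (j−n) p₂` for all `0 ≤ n < j`) is at least `ρN`. -/
theorem pliss_explicit_count (p0 p1 p2 : ℝ) (h01 : p1 ≤ p0) (h12 : p2 < p1)
    (h2 : 0 < p2) (N : ℕ) (hN : 1 ≤ N) (a : ℕ → ℝ)
    (hsum : (N : ℝ) * p1 ≤ ∑ i ∈ Finset.Icc 1 N, a i)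
    (hbd : ∀ i ∈ Finset.Icc 1 N, a i ≤ p0) :
    ((p1 - p2) / (p0 - p2)) * N ≤
      (((Finset.Icc 1 N).filter (fun j =>
        ∀ n : ℕ, n < j → ((j : ℝ) - (n : ℝ)) * p2 ≤ ∑ i ∈ Finset.Icc (n + 1) j, a i)).card : ℝ) := by
  have hC : 0 < p0 - p2 := by linarith
  set S : ℕ → ℝ := fun k => (∑ i ∈ Finset.Icc 1 k, a i) - k * p2 with hSdef
  have hS0 : S 0 = 0 := by simp [hSdef]
  have hSstep : ∀ k, S (k + 1) = S k + (a (k + 1) - p2) := by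
    intro k
    simp only [hSdef]
    rw [Finset.sum_Icc_succ_top (by omega : 1 ≤ k + 1)]
    push_cast
    ring
  have hIoc : ∀ k : ℕ, Finset.Icc 1 k = Finset.Ioc 0 k := by
    intro k; ext x; simp [Nat.lt_iff_add_one_le]
  have hsplit : ∀ n j : ℕ, n ≤ j →
      ∑ i ∈ Finset.Icc (n + 1) j, a i
        = (∑ i ∈ Finset.Icc 1 j, a i) - ∑ i ∈ Finset.Icc 1 n, a i := by
    intro n j h
    have hcons := Finset.sum_Ioc_consecutive a (Nat.zero_le n) h
    rw [hIoc, hIoc, Finset.Icc_add_one_left_eq_Ioc]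
    linarith [hcons]
  set P : ℕ → Prop := fun j => ∀ n, n < j → S n ≤ S j with hPdef
  -- the filter predicate is equivalent to P
  have hfilter : ((Finset.Icc 1 N).filter (fun j =>
        ∀ n : ℕ, n < j → ((j : ℝ) - (n : ℝ)) * p2 ≤ ∑ i ∈ Finset.Icc (n + 1) j, a i))
      = (Finset.Icc 1 N).filter P := by
    apply Finset.filter_congr
    intro j _
    constructor
    · intro hq n hn
      have := hq n hn
      have hs := hsplit n j (le_of_lt hn)
      simp only [hSdef]
      have hcast : ((j : ℝ) - (n : ℝ)) * p2 = j * p2 - n * p2 := by ring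
      rw [hs] at this
      linarith [this]
    · intro hp n hn
      have := hp n hn
      have hs := hsplit n j (le_of_lt hn)
      simp only [hSdef] at this
      rw [hs]
      linarith [this]
  rw [hfilter]
  -- main induction
  have key : ∀ k, k ≤ N → ∀ n, n ≤ k →
      S n ≤ (((Finset.Icc 1 k).filter P).card : ℝ) * (p0 - p2) := by
    intro k
    induction k with
    | zero =>
      intro _ n hn
      interval_cases n
      simp [hS0]
    | succ k ih =>
      intro hk n hn
      have hk' : k ≤ N := by omega
      have hmono : (((Finset.Icc 1 k).filter P).card : ℝ)
          ≤ (((Finset.Icc 1 (k + 1)).filter P).card : ℝ) := by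
        exact_mod_cast Finset.card_le_card (Finset.filter_subset_filter P
          (Finset.Icc_subset_Icc_right (by omega)))
      rcases Nat.lt_succ_iff_lt_or_eq.mp (Nat.lt_succ_of_le hn) with hlt | heq
      · exact (ih hk' n (by omega)).trans (mul_le_mul_of_nonneg_right hmono hC.le)
      · subst heq
        by_cases hcase : ∃ m, m ≤ k ∧ S (k + 1) ≤ S m
        · obtain ⟨m, hm, hsm⟩ := hcase
          exact hsm.trans ((ih hk' m hm).trans (mul_le_mul_of_nonneg_right hmono hC.le))
        · push_neg at hcase
          have hP : P (k + 1) := by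
            intro m hm
            exact (hcase m (by omega)).le
          have hcard : ((Finset.Icc 1 (k + 1)).filter P).card
              = ((Finset.Icc 1 k).filter P).card + 1 := by
            have hins : Finset.Icc 1 (k + 1) = insert (k + 1) (Finset.Icc 1 k) := by
              ext x; simp; omega
            rw [hins, Finset.filter_insert, if_pos hP,
              Finset.card_insert_of_notMem]
            intro hmem
            have := Finset.mem_of_mem_filter _ hmem
            simp at this
          have habd : a (k + 1) ≤ p0 := hbd (k + 1) (by simp; omega)
          have hSk : S k ≤ (((Finset.Icc 1 k).filter P).card : ℝ) * (p0 - p2) :=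
            ih hk' k le_rfl
          have hstep := hSstep k
          rw [hcard]
          push_cast
          linarith [hSk, hstep]
  have hSN : (N : ℝ) * (p1 - p2) ≤ S N := by
    simp only [hSdef]
    linarith [hsum]
  have hl := key N le_rfl N le_rfl
  rw [div_mul_eq_mul_div, div_le_iff₀ hC]
  nlinarith [hSN, hl]
end
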